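/- arXiv:1005.1524 — 8 statements merged into one kernel-verified Lean document; each statement's English description precedes it below -/
import Mathlib

section
/- Let q be a prime power, F a finite extension field of GF(q), and let α₁, …, αₙ be pairwise distinct nonzero elements of F. Then the q-ary Goppa codes Γ(L, X^q) and Γ(L, X^{q−1}) coincide; that is, for every c ∈ GF(q)ⁿ, X^{q−1} divides Σᵢ cᵢ ∏_{j≠i}(X − αⱼ) in F[X] if and only if X^q divides Σᵢ cᵢ ∏_{j≠i}(X − αⱼ) in F[X]. -/
open Polynomial

/-- The syndrome polynomial `Σᵢ cᵢ ∏_{j≠i} (X − αⱼ)` of a word `c ∈ GF(q)ⁿ` with respect to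
the locator tuple `α`, with coefficients viewed in the extension field `F`. -/
noncomputable def goppaSum {K F : Type*} [Field K] [Field F] [Algebra K F] {n : ℕ}
    (α : Fin n → F) (c : Fin n → K) : Polynomial F :=
  ∑ i, Polynomial.C (algebraMap K F (c i)) *
    ∏ j ∈ Finset.univ.erase i, (Polynomial.X - Polynomial.C (α j))

/-! In `F⟦X⟧` every `X - αᵢ` is invertible, with inverse `-Σₖ αᵢ^{-(k+1)} Xᵏ`, so the syndrome
polynomial is a unit times `Σᵢ cᵢ / (X - αᵢ)`. Hence `X^m` divides it iff the power sums
`Σᵢ cᵢ αᵢ^{-(k+1)}` vanish for `k < m`. Passing from `m = q - 1` to `m = q` adds the power sum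
for `k = q - 1`, which is the `q`-th power of the one for `k = 0` because `x ↦ x^q` is
`GF(q)`-linear. -/

namespace PowerSeries

open Finset

variable {R : Type*} [CommRing R]

theorem X_sub_C_mul_invUnitsSub (u : Rˣ) : (X - C (u : R)) * invUnitsSub u = -1 := by
  rw [mul_comm, ← neg_sub, mul_neg, invUnitsSub_mul_sub]

theorem isUnit_invUnitsSub (u : Rˣ) : IsUnit (invUnitsSub u) :=
  IsUnit.of_mul_eq_one _ (invUnitsSub_mul_sub u)

theorem sum_mul_prod_erase_X_sub_C_mul_prod_invUnitsSub {ι : Type*} [Fintype ι] [DecidableEq ι]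
    (u : ι → Rˣ) (c : ι → R) :
    (∑ i, C (c i) * ∏ j ∈ univ.erase i, (X - C (u j : R))) * ∏ j, invUnitsSub (u j) =
      (-1) ^ (Fintype.card ι - 1) * ∑ i, C (c i) * invUnitsSub (u i) := by
  rw [sum_mul, mul_sum]
  refine sum_congr rfl fun i _ => ?_
  rw [← mul_prod_erase univ _ (mem_univ i)]
  calc C (c i) * (∏ j ∈ univ.erase i, (X - C (u j : R))) *
        (invUnitsSub (u i) * ∏ j ∈ univ.erase i, invUnitsSub (u j))
      = C (c i) * invUnitsSub (u i) *
          ∏ j ∈ univ.erase i, ((X - C (u j : R)) * invUnitsSub (u j)) := by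
        rw [prod_mul_distrib]; ring
    _ = _ := by
        simp only [X_sub_C_mul_invUnitsSub, prod_const, card_erase_of_mem (mem_univ i), card_univ]
        ring

end PowerSeries

theorem Polynomial.X_pow_dvd_coe_iff {R : Type*} [CommRing R] {p : R[X]} {m : ℕ} :
    PowerSeries.X ^ m ∣ (p : PowerSeries R) ↔ X ^ m ∣ p := by
  simp only [PowerSeries.X_pow_dvd_iff, Polynomial.X_pow_dvd_iff, Polynomial.coeff_coe]

theorem coe_goppaSum {K F : Type*} [Field K] [Field F] [Algebra K F] {n : ℕ}
    (α : Fin n → F) (c : Fin n → K) :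
    (goppaSum α c : PowerSeries F) = ∑ i, PowerSeries.C (algebraMap K F (c i)) *
      ∏ j ∈ Finset.univ.erase i, (PowerSeries.X - PowerSeries.C (α j)) := by
  rw [goppaSum, ← Polynomial.coeToPowerSeries.ringHom_apply]
  simp only [map_sum, map_prod, map_mul, map_sub, Polynomial.coeToPowerSeries.ringHom_apply,
    Polynomial.coe_C, Polynomial.coe_X]

theorem FiniteField.sum_algebraMap_mul_pow_card {K A ι : Type*} [Field K] [Fintype K] [CommRing A]
    [Algebra K A] (s : Finset ι) (c : ι → K) (x : ι → A) :
    ∑ i ∈ s, algebraMap K A (c i) * x i ^ Fintype.card K =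
      (∑ i ∈ s, algebraMap K A (c i) * x i) ^ Fintype.card K := by
  simp only [← Algebra.smul_def]
  calc ∑ i ∈ s, c i • x i ^ Fintype.card K
      = ∑ i ∈ s, FiniteField.frobeniusAlgHom K A (c i • x i) := by simp only [map_smul]; rfl
    _ = (∑ i ∈ s, c i • x i) ^ Fintype.card K := (map_sum _ _ s).symm

theorem X_pow_dvd_goppaSum_iff {K F : Type*} [Field K] [Field F] [Algebra K F] {n : ℕ}
    (α : Fin n → F) (h0 : ∀ i, α i ≠ 0) (c : Fin n → K) (m : ℕ) :
    X ^ m ∣ goppaSum α c ↔ ∀ k < m, ∑ i, algebraMap K F (c i) * (α i)⁻¹ ^ (k + 1) = 0 := by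
  set u : Fin n → Fˣ := fun i => Units.mk0 (α i) (h0 i)
  have hI : IsUnit (∏ j, PowerSeries.invUnitsSub (u j)) :=
    IsUnit.prod_univ_iff.mpr fun j => PowerSeries.isUnit_invUnitsSub (u j)
  have key : (goppaSum α c : PowerSeries F) * ∏ j, PowerSeries.invUnitsSub (u j) =
      (-1) ^ (Fintype.card (Fin n) - 1) *
        ∑ i, PowerSeries.C (algebraMap K F (c i)) * PowerSeries.invUnitsSub (u i) := by
    rw [coe_goppaSum]
    exact PowerSeries.sum_mul_prod_erase_X_sub_C_mul_prod_invUnitsSub u _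
  rw [← Polynomial.X_pow_dvd_coe_iff, ← hI.dvd_mul_right, key,
    ((isUnit_neg_one).pow _).dvd_mul_left, PowerSeries.X_pow_dvd_iff]
  simp only [map_sum, PowerSeries.coeff_C_mul, PowerSeries.coeff_invUnitsSub, u, one_divp,
    Units.val_inv_eq_inv_val, Units.val_pow_eq_pow_val, Units.val_mk0, inv_pow]

theorem goppa_code_Xq_eq_Xq_sub_one_general {K F : Type*} [Field K] [Fintype K]
    [Field F] [Algebra K F] {n : ℕ}
    (α : Fin n → F) (h0 : ∀ i, α i ≠ 0)
    (c : Fin n → K) :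
    (Polynomial.X ^ (Fintype.card K - 1) ∣ goppaSum α c) ↔
      (Polynomial.X ^ (Fintype.card K) ∣ goppaSum α c) := by
  obtain ⟨q, hq⟩ : ∃ q, Fintype.card K = q + 1 :=
    Nat.exists_eq_succ_of_ne_zero Fintype.card_ne_zero
  have hq_pos : 0 < q := by have := Fintype.one_lt_card (α := K); omega
  rw [X_pow_dvd_goppaSum_iff α h0, X_pow_dvd_goppaSum_iff α h0, hq, Nat.add_sub_cancel,
    Nat.forall_lt_succ_right, iff_self_and]
  intro h
  have h_first := h 0 hq_pos
  simp only [zero_add, pow_one] at h_first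
  rw [← hq, FiniteField.sum_algebraMap_mul_pow_card, h_first, zero_pow Fintype.card_ne_zero]

/-- for pairwise distinct nonzero locators, the Goppa codes `Γ(L, X^q)` and
`Γ(L, X^{q−1})` coincide, where `q` is the cardinality of the base field `GF(q)`. -/
theorem goppa_code_Xq_eq_Xq_sub_one {K F : Type*} [Field K] [Fintype K]
    [Field F] [Fintype F] [Algebra K F] {n : ℕ}
    (α : Fin n → F) (hα : Function.Injective α) (h0 : ∀ i, α i ≠ 0)
    (c : Fin n → K) :
    (Polynomial.X ^ (Fintype.card K - 1) ∣ goppaSum α c) ↔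
      (Polynomial.X ^ (Fintype.card K) ∣ goppaSum α c) :=
  goppa_code_Xq_eq_Xq_sub_one_general α h0 c
end

section
/- Let q be a prime power, F a finite extension field of GF(q), γ ∈ F, and let α₁, …, αₙ be pairwise distinct elements of F all different from γ. Then the q-ary Goppa codes Γ(L, (X − γ)^q) and Γ(L, (X − γ)^{q−1}) coincide; that is, for every c ∈ GF(q)ⁿ, (X − γ)^{q−1} divides Σᵢ cᵢ ∏_{j≠i}(X − αⱼ) in F[X] if and only if (X − γ)^q divides Σᵢ cᵢ ∏_{j≠i}(X − αⱼ) in F[X]. -/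
open Polynomial

section Aux

variable {F : Type*} [Field F]

/-- Telescoping identity: `(X - a) · Σ_{k<m} d^{k+1}(X-γ)^k = d^m (X-γ)^m - 1`
where `d = (a-γ)⁻¹`. -/
lemma goppa_identA (γ a : F) (h : a ≠ γ) (m : ℕ) :
    (X - C a) * ∑ k ∈ Finset.range m, C ((a - γ)⁻¹ ^ (k + 1)) * (X - C γ) ^ k
      = C ((a - γ)⁻¹ ^ m) * (X - C γ) ^ m - 1 := by
  induction m with
  | zero => simp
  | succ m ih =>
    rw [Finset.sum_range_succ, mul_add, ih]
    have hb : a - γ ≠ 0 := sub_ne_zero.mpr h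
    have hc : (C (a - γ) : F[X]) * C ((a - γ)⁻¹ ^ (m + 1)) = C ((a - γ)⁻¹ ^ m) := by
      rw [← map_mul]
      congr 1
      rw [pow_succ, ← mul_assoc, mul_comm (a - γ), mul_assoc, mul_inv_cancel₀ hb, mul_one]
    have hX : (X - C a : F[X]) = (X - C γ) - C (a - γ) := by rw [C_sub]; ring
    rw [hX]
    linear_combination (-((X - C γ) ^ m : F[X])) * hc

/-- If `Σ_{k<m} C (a k) (X-γ)^k = 0` then all `a k = 0` for `k < m`. -/
lemma goppa_coeffs_zero (γ : F) :
    ∀ (m : ℕ) (a : ℕ → F),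
      (∑ k ∈ Finset.range m, C (a k) * (X - C γ) ^ k) = 0 → ∀ k < m, a k = 0 := by
  intro m
  induction m with
  | zero => intro a _ k hk; omega
  | succ m ih =>
    intro a h k hk
    have hsplit : (∑ k ∈ Finset.range (m + 1), C (a k) * (X - C γ) ^ k)
        = C (a 0) + (X - C γ) * ∑ k ∈ Finset.range m, C (a (k + 1)) * (X - C γ) ^ k := by
      rw [Finset.sum_range_succ', Finset.mul_sum]
      simp only [pow_zero, mul_one, pow_succ]
      rw [add_comm]
      congr 1
      exact Finset.sum_congr rfl fun k _ => by ring
    rw [hsplit] at h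
    have h0 : a 0 = 0 := by
      have := congrArg (Polynomial.eval γ) h
      simpa using this
    rw [h0, map_zero, zero_add] at h
    have hne : (X - C γ : F[X]) ≠ 0 := X_sub_C_ne_zero γ
    have hrest : (∑ k ∈ Finset.range m, C (a (k + 1)) * (X - C γ) ^ k) = 0 :=
      (mul_eq_zero.mp h).resolve_left hne
    rcases Nat.eq_zero_or_pos k with hk0 | hkpos
    · rw [hk0]; exact h0
    · obtain ⟨k', rfl⟩ := Nat.exists_eq_add_of_lt hkpos
      simp only [zero_add] at *
      exact ih (fun j => a (j + 1)) hrest k' (by omega)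

end Aux

section Key

variable {K F : Type*} [Field K] [Field F] [Algebra K F] {n : ℕ}

/-- The main polynomial identity relating the syndrome to the weighted power sums. -/
lemma goppa_identB (γ : F) (α : Fin n → F) (hγ : ∀ i, α i ≠ γ) (c : Fin n → K) (m : ℕ) :
    (∏ j, (X - C (α j))) *
        ∑ k ∈ Finset.range m,
          C (∑ i, algebraMap K F (c i) * (α i - γ)⁻¹ ^ (k + 1)) * (X - C γ) ^ k
      = (X - C γ) ^ m *
          ∑ i, C (algebraMap K F (c i) * (α i - γ)⁻¹ ^ m) *
            ∏ j ∈ Finset.univ.erase i, (X - C (α j)) - goppaSum α c := by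
  calc (∏ j, (X - C (α j))) *
        ∑ k ∈ Finset.range m,
          C (∑ i, algebraMap K F (c i) * (α i - γ)⁻¹ ^ (k + 1)) * (X - C γ) ^ k
      = ∑ k ∈ Finset.range m, ∑ i, (∏ j, (X - C (α j))) *
          (C (algebraMap K F (c i) * (α i - γ)⁻¹ ^ (k + 1)) * (X - C γ) ^ k) := by
        rw [Finset.mul_sum]
        refine Finset.sum_congr rfl fun k _ => ?_
        rw [map_sum, Finset.sum_mul, Finset.mul_sum]
    _ = ∑ i, ∑ k ∈ Finset.range m, (∏ j, (X - C (α j))) *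
          (C (algebraMap K F (c i) * (α i - γ)⁻¹ ^ (k + 1)) * (X - C γ) ^ k) :=
        Finset.sum_comm
    _ = ∑ i, ((X - C γ) ^ m * (C (algebraMap K F (c i) * (α i - γ)⁻¹ ^ m) *
          ∏ j ∈ Finset.univ.erase i, (X - C (α j))) -
          C (algebraMap K F (c i)) * ∏ j ∈ Finset.univ.erase i, (X - C (α j))) := by
        refine Finset.sum_congr rfl fun i _ => ?_
        have hfi : (∏ j, (X - C (α j)) : F[X])
            = (X - C (α i)) * ∏ j ∈ Finset.univ.erase i, (X - C (α j)) :=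
          (Finset.mul_prod_erase _ _ (Finset.mem_univ i)).symm
        have hA := goppa_identA γ (α i) (hγ i) m
        have step : (∑ k ∈ Finset.range m, (∏ j, (X - C (α j))) *
              (C (algebraMap K F (c i) * (α i - γ)⁻¹ ^ (k + 1)) * (X - C γ) ^ k))
            = (C (algebraMap K F (c i)) * ∏ j ∈ Finset.univ.erase i, (X - C (α j))) *
                ((X - C (α i)) *
                  ∑ k ∈ Finset.range m, C ((α i - γ)⁻¹ ^ (k + 1)) * (X - C γ) ^ k) := by
          simp only [Finset.mul_sum]
          refine Finset.sum_congr rfl fun k _ => ?_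
          rw [hfi, map_mul]
          ring
        rw [step, hA, map_mul]
        ring
    _ = (X - C γ) ^ m *
          ∑ i, C (algebraMap K F (c i) * (α i - γ)⁻¹ ^ m) *
            ∏ j ∈ Finset.univ.erase i, (X - C (α j)) - goppaSum α c := by
        unfold goppaSum
        rw [Finset.sum_sub_distrib, ← Finset.mul_sum]

/-- Divisibility by `(X-γ)^m` is equivalent to vanishing of the weighted power sums. -/
lemma goppa_dvd_iff (γ : F) (α : Fin n → F) (hγ : ∀ i, α i ≠ γ) (c : Fin n → K) (m : ℕ) :
    ((X - C γ) ^ m ∣ goppaSum α c) ↔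
      ∀ k < m, (∑ i, algebraMap K F (c i) * (α i - γ)⁻¹ ^ (k + 1)) = 0 := by
  have hB := goppa_identB γ α hγ c m
  constructor
  · intro hdvd
    -- (X-γ)^m divides f * Q, f coprime to (X-γ), so (X-γ)^m ∣ Q, hence Q = 0
    set Q : F[X] := ∑ k ∈ Finset.range m,
      C (∑ i, algebraMap K F (c i) * (α i - γ)⁻¹ ^ (k + 1)) * (X - C γ) ^ k with hQ
    have hdvd2 : (X - C γ) ^ m ∣ (∏ j, (X - C (α j))) * Q := by
      rw [hB]
      exact dvd_sub (Dvd.intro _ rfl) hdvd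
    have hcop : IsCoprime (X - C γ : F[X]) (∏ j, (X - C (α j))) := by
      rw [(irreducible_X_sub_C γ).coprime_iff_not_dvd, dvd_iff_isRoot, IsRoot.def, eval_prod]
      simp only [eval_sub, eval_X, eval_C]
      rw [Finset.prod_eq_zero_iff]
      push_neg
      intro i _
      exact sub_ne_zero.mpr fun hh => (hγ i) hh.symm
    have hdvdQ : (X - C γ) ^ m ∣ Q :=
      (hcop.pow_left).dvd_of_dvd_mul_left hdvd2
    have hQ0 : Q = 0 := by
      rcases eq_or_ne Q 0 with h0 | h0
      · exact h0
      · exfalso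
        have hdeg : Q.degree < ((X - C γ : F[X]) ^ m).degree := by
          have hdm : ((X - C γ : F[X]) ^ m).degree = (m : WithBot ℕ) := by
            rw [degree_pow, degree_X_sub_C, nsmul_eq_mul, mul_one]
          rw [hdm]
          refine lt_of_le_of_lt (degree_sum_le _ _) ?_
          rw [Finset.sup_lt_iff (show (⊥ : WithBot ℕ) < (m : WithBot ℕ) by exact_mod_cast WithBot.bot_lt_coe m)]
          intro k hk
          refine lt_of_le_of_lt (degree_mul_le _ _) ?_
          have h2 : ((X - C γ : F[X]) ^ k).degree ≤ (k : WithBot ℕ) := by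
            rw [degree_pow, degree_X_sub_C, nsmul_eq_mul, mul_one]
          refine lt_of_le_of_lt (add_le_add degree_C_le h2) ?_
          rw [zero_add]
          exact_mod_cast Finset.mem_range.mp hk
        exact h0 (eq_zero_of_dvd_of_degree_lt hdvdQ hdeg)
    intro k hk
    exact goppa_coeffs_zero γ m _ hQ0 k hk
  · intro hzero
    have : (∑ k ∈ Finset.range m,
        C (∑ i, algebraMap K F (c i) * (α i - γ)⁻¹ ^ (k + 1)) * (X - C γ) ^ k) = 0 := by
      refine Finset.sum_eq_zero fun k hk => ?_
      rw [hzero k (Finset.mem_range.mp hk), map_zero, zero_mul]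
    rw [this, mul_zero] at hB
    have : goppaSum α c = (X - C γ) ^ m *
        ∑ i, C (algebraMap K F (c i) * (α i - γ)⁻¹ ^ m) *
          ∏ j ∈ Finset.univ.erase i, (X - C (α j)) := by
      linear_combination hB
    exact Dvd.intro _ this.symm

end Key

/-- for pairwise distinct locators all different from `γ`, the Goppa codes
`Γ(L, (X−γ)^q)` and `Γ(L, (X−γ)^{q−1})` coincide, where `q = |GF(q)|`. -/
theorem goppa_code_cumulative_q_eq_q_sub_one {K F : Type*} [Field K] [Fintype K]
    [Field F] [Fintype F] [Algebra K F] {n : ℕ} (γ : F)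
    (α : Fin n → F) (hα : Function.Injective α) (hγ : ∀ i, α i ≠ γ)
    (c : Fin n → K) :
    ((Polynomial.X - Polynomial.C γ) ^ (Fintype.card K - 1) ∣ goppaSum α c) ↔
      ((Polynomial.X - Polynomial.C γ) ^ (Fintype.card K) ∣ goppaSum α c) := by
  set q := Fintype.card K with hq
  have hq2 : 2 ≤ q := Fintype.one_lt_card
  rw [goppa_dvd_iff γ α hγ c, goppa_dvd_iff γ α hγ c]
  constructor
  · intro h k hk
    rcases Nat.lt_or_ge k (q - 1) with hlt | hge
    · exact h k hlt
    · have hkq : k + 1 = q := by omega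
      rw [hkq]
      -- Frobenius argument
      have h1 : (∑ i, algebraMap K F (c i) * (α i - γ)⁻¹ ^ (0 + 1)) = 0 := h 0 (by omega)
      simp only [zero_add, pow_one] at h1
      -- characteristic setup
      haveI hp : Fact (ringChar K).Prime := ⟨CharP.char_is_prime K (ringChar K)⟩
      obtain ⟨m, hprime, hcard⟩ := FiniteField.card K (ringChar K)
      haveI hFchar : CharP F (ringChar K) :=
        charP_of_injective_algebraMap (algebraMap K F).injective (ringChar K)
      have key : ∀ i : Fin n, algebraMap K F (c i) * (α i - γ)⁻¹ ^ q
          = (algebraMap K F (c i) * (α i - γ)⁻¹) ^ q := by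
        intro i
        rw [mul_pow]
        congr 1
        rw [← map_pow, hq, FiniteField.pow_card]
      calc (∑ i, algebraMap K F (c i) * (α i - γ)⁻¹ ^ q)
          = ∑ i, (algebraMap K F (c i) * (α i - γ)⁻¹) ^ q := by
            exact Finset.sum_congr rfl fun i _ => key i
        _ = (∑ i, algebraMap K F (c i) * (α i - γ)⁻¹) ^ q := by
            rw [hq, hcard]
            exact (sum_pow_char_pow (p := ringChar K) (n := (m : ℕ)) Finset.univ
              (fun i => algebraMap K F (c i) * (α i - γ)⁻¹)).symm
        _ = 0 := by rw [h1, zero_pow (by omega)]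
  · intro h k hk
    exact h k (by omega)
end

section
/- Let q be a prime power, F a finite extension field of GF(q), and let G₁, …, G_s ∈ F[X] be nonzero pairwise coprime polynomials. Let α₁, …, αₙ be pairwise distinct elements of F with Gᵢ(αₖ) ≠ 0 for all i and k, and let j ≥ 1. Then the GF(q)-dimension k of the Goppa code Γ(L, ∏ᵢ Gᵢ^j) satisfies k ≥ n − Σᵢ rᵢ, where rᵢ = n − dim_{GF(q)} Γ(L, Gᵢ^j) is the redundancy of the code Γ(L, Gᵢ^j). -/
open Polynomial

/-- The Goppa code `Γ(L, G)` as a `GF(q)`-subspace of `GF(q)ⁿ`. -/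
noncomputable def goppaCode {K F : Type*} [Field K] [Field F] [Algebra K F] {n : ℕ}
    (α : Fin n → F) (G : Polynomial F) : Submodule K (Fin n → K) where
  carrier := {c | G ∣ goppaSum α c}
  add_mem' := by
    intro a b ha hb
    have h : goppaSum α (a + b) = goppaSum α a + goppaSum α b := by
      simp only [goppaSum, Pi.add_apply, map_add, add_mul, Finset.sum_add_distrib]
    simp only [Set.mem_setOf_eq] at *
    rw [h]
    exact dvd_add ha hb
  zero_mem' := by
    simp only [Set.mem_setOf_eq, goppaSum, Pi.zero_apply, map_zero, Polynomial.C_0,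
      zero_mul, Finset.sum_const_zero]
    exact dvd_zero _
  smul_mem' := by
    intro k c hc
    have h : goppaSum α (k • c) = Polynomial.C (algebraMap K F k) * goppaSum α c := by
      simp only [goppaSum, Pi.smul_apply, smul_eq_mul, map_mul, Finset.mul_sum, mul_assoc]
    simp only [Set.mem_setOf_eq] at *
    rw [h]
    exact Dvd.dvd.mul_left hc _

/-!
The divisibility condition defining `Γ(L, G)` is a condition on the single polynomial
`goppaSum α c`, and for pairwise coprime moduli `∏ᵢ Gᵢ ∣ f` holds iff every `Gᵢ ∣ f`.
Hence `Γ(L, ∏ᵢ Gᵢ^j) = ⋂ᵢ Γ(L, Gᵢ^j)`, and codimension is subadditive under intersection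
of subspaces, by Grassmann's formula `dim (A + B) + dim (A ∩ B) = dim A + dim B`.
-/

open Module Function

namespace Submodule

variable {K V : Type*} [DivisionRing K] [AddCommGroup V] [Module K V] [FiniteDimensional K V]

theorem finrank_sub_finrank_inf_le (A B : Submodule K V) :
    finrank K V - finrank K ↥(A ⊓ B) ≤
      (finrank K V - finrank K A) + (finrank K V - finrank K B) := by
  have grassmann := finrank_sup_add_finrank_inf_eq A B
  have hsup := finrank_le (A ⊔ B)
  have hA := finrank_le A
  have hB := finrank_le B
  omega

theorem finrank_sub_sum_codim_le_finrank_inf {ι : Type*} (W : ι → Submodule K V)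
    (t : Finset ι) :
    finrank K V - ∑ i ∈ t, (finrank K V - finrank K (W i)) ≤ finrank K ↥(t.inf W) := by
  classical
  induction t using Finset.induction with
  | empty => rw [Finset.inf_empty, finrank_top]; exact Nat.sub_le _ _
  | insert a t ha ih =>
    rw [Finset.sum_insert ha, Finset.inf_insert]
    have := finrank_sub_finrank_inf_le (W a) (t.inf W)
    have := finrank_le (t.inf W)
    omega

theorem finrank_sub_sum_codim_le_finrank_iInf {ι : Type*} [Fintype ι]
    (W : ι → Submodule K V) :
    finrank K V - ∑ i, (finrank K V - finrank K (W i)) ≤ finrank K ↥(⨅ i, W i) := by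
  rw [← Finset.inf_univ_eq_iInf]
  exact finrank_sub_sum_codim_le_finrank_inf W Finset.univ

end Submodule

theorem goppaCode_prod_eq_iInf {K F ι : Type*} [Field K] [Field F] [Algebra K F] {n : ℕ}
    [Fintype ι] (α : Fin n → F) {G : ι → F[X]} (hG : Pairwise (IsCoprime on G)) :
    goppaCode (K := K) α (∏ i, G i) = ⨅ i, goppaCode α (G i) := by
  ext c
  simp only [Submodule.mem_iInf]
  exact ⟨fun hc i => (Finset.dvd_prod_of_mem G (Finset.mem_univ i)).trans hc,
    Fintype.prod_dvd_of_coprime hG⟩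

theorem goppa_dim_product_ge_general {K F : Type*} [Field K]
    [Field F] [Algebra K F] {n s : ℕ}
    (G : Fin s → Polynomial F)
    (hcop : ∀ i j : Fin s, i ≠ j → IsCoprime (G i) (G j))
    (α : Fin n → F)
    (j : ℕ) :
    n - ∑ i, (n - Module.finrank K (goppaCode (K := K) α ((G i) ^ j))) ≤
      Module.finrank K (goppaCode (K := K) α (∏ i, (G i) ^ j)) := by
  rw [goppaCode_prod_eq_iInf α fun i k hik => (hcop i k hik).pow]
  simpa only [Module.finrank_fin_fun] using Submodule.finrank_sub_sum_codim_le_finrank_iInf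
    fun i => goppaCode (K := K) α (G i ^ j)

/-- for pairwise coprime nonzero polynomials `G₁, …, G_s`, the dimension of
`Γ(L, ∏ᵢ Gᵢ^j)` is at least `n − Σᵢ rᵢ` where `rᵢ` is the redundancy of `Γ(L, Gᵢ^j)`. -/
theorem goppa_dim_product_ge {K F : Type*} [Field K] [Fintype K]
    [Field F] [Fintype F] [Algebra K F] {n s : ℕ}
    (G : Fin s → Polynomial F) (hG : ∀ i, G i ≠ 0)
    (hcop : ∀ i j : Fin s, i ≠ j → IsCoprime (G i) (G j))
    (α : Fin n → F) (hα : Function.Injective α)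
    (heval : ∀ (i : Fin s) (k : Fin n), (G i).eval (α k) ≠ 0)
    (j : ℕ) (hj : 1 ≤ j) :
    n - ∑ i, (n - Module.finrank K (goppaCode (K := K) α ((G i) ^ j))) ≤
      Module.finrank K (goppaCode (K := K) α (∏ i, (G i) ^ j)) :=
  goppa_dim_product_ge_general G hcop α j
end

section
/- Let q be a prime power, l ≥ 1, t = q^l, and F = GF(t²) (so GF(q) ⊆ GF(t) ⊆ F). Let L = (α₁, …, αₙ) enumerate the set {α ∈ F : α ≠ 0 and α^{t−1} + 1 ≠ 0} (equivalently, α^t + α ≠ 0). Then for every integer i with 1 ≤ i ≤ q−2 and every c ∈ GF(q)ⁿ: c belongs to Γ(L, (X^t + X)^i) if and only if c belongs to Γ(L, (X^{t−1} + 1)^i) and Σₖ cₖ · (αₖ^t + αₖ)^{−i} = 0 in F. -/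
/-! Write `W = X^t + X = X·V` with `V = X^(t-1) + 1`, and `β = α^t + α` for a locator `α`.
Since `β` lies in `GF(t)`, the locators are exactly the roots of `W^(t-1) - 1`, and expanding
`1/(X - α)` in powers of `W` shows that the syndrome is congruent modulo `W^i` to
`T = Σ_{m<i} W^m σ_{m+1}`, where `σ_m` has degree `< t` and its coefficients are the moments
`M(m, r) = Σ_k c_k β_k^(-m) α_k^r`. Thus `W^i` divides the syndrome iff `T = 0`, and `V^i` does iff
`V^i ∣ T`. Dividing `T` by `V` one power at a time shows that `V^i ∣ T` forces `M(j, r)` to depend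
only on `j - r` for `r < j ≤ i`. The Frobenius `α ↦ α^t = β - α` then writes `M(i, r)^t` as an
alternating binomial sum of equal moments, so `M(i, r) = 0` for `0 < r < i`, and
`T = M(i, 0) X^(i-1) V^i`, where `M(i, 0)` is the extra parity check. -/

open Polynomial

open Finset

theorem FiniteField.prod_X_sub_C_filter_not_isRoot {F : Type*} [Field F] [Fintype F]
    [DecidableEq F] {f g : F[X]} (hg : g.Monic)
    (hfg : f * g = X ^ Fintype.card F - X) :
    ∏ x ∈ univ.filter (fun x => ¬ f.IsRoot x), (X - C x) = g := by
  have hcop (s : Finset F) : (s : Set F).Pairwise (Function.onFun IsCoprime fun x => X - C x) :=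
    fun x _ y _ hxy => pairwise_coprime_X_sub_C Function.injective_id hxy
  have hroot (x : F) : (f * g).IsRoot x := by simp [IsRoot, hfg, FiniteField.pow_card]
  obtain ⟨a, ha⟩ : ∏ x ∈ univ.filter (fun x => f.IsRoot x), (X - C x) ∣ f :=
    prod_dvd_of_coprime (hcop _) fun x hx => dvd_iff_isRoot.2 (mem_filter.1 hx).2
  have hdvd : ∏ x ∈ univ.filter (fun x => ¬ f.IsRoot x), (X - C x) ∣ g :=
    prod_dvd_of_coprime (hcop _) fun x hx =>
      dvd_iff_isRoot.2 ((root_mul.1 (hroot x)).resolve_left (mem_filter.1 hx).2)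
  have hprod : ∏ x : F, (X - C x) = X ^ Fintype.card F - X := by
    have hmon : (X ^ Fintype.card F - X : F[X]).Monic :=
      monic_X_pow_sub (by rw [degree_X]; exact_mod_cast Fintype.one_lt_card)
    have h := prod_multiset_X_sub_C_of_monic_of_roots_card_eq hmon (by
      rw [FiniteField.roots_X_pow_card_sub_X,
        FiniteField.X_pow_card_sub_X_natDegree_eq F Fintype.one_lt_card]; rfl)
    rwa [FiniteField.roots_X_pow_card_sub_X] at h
  have hmonic (s : Finset F) : (∏ x ∈ s, (X - C x)).Monic :=
    monic_prod_of_monic _ _ fun x _ => monic_X_sub_C x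
  have hgdvd : g ∣ ∏ x ∈ univ.filter (fun x => ¬ f.IsRoot x), (X - C x) := by
    refine ⟨a, mul_left_cancel₀ (hmonic (univ.filter fun x => f.IsRoot x)).ne_zero ?_⟩
    rw [prod_filter_mul_prod_filter_not, hprod, ← hfg]
    linear_combination g * ha
  exact eq_of_monic_of_associated (hmonic _) hg (associated_of_dvd_dvd hdvd hgdvd)

section GoppaPolynomials

variable {R : Type*} [CommRing R] {t : ℕ}

theorem X_mul_X_pow_sub_one_add_one (ht : 1 ≤ t) : X * (X ^ (t - 1) + 1 : R[X]) = X ^ t + X := by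
  rw [mul_add, mul_one, ← pow_succ', Nat.sub_add_cancel ht]

theorem X_pow_sub_one_add_one_pow_dvd (ht : 1 ≤ t) (j : ℕ) :
    (X ^ (t - 1) + 1 : R[X]) ^ j ∣ (X ^ t + X) ^ j :=
  pow_dvd_pow_of_dvd (Dvd.intro_left _ (X_mul_X_pow_sub_one_add_one ht)) j

variable [Nontrivial R]

theorem degree_X_pow_add_X (ht : 1 < t) : (X ^ t + X : R[X]).degree = t := by
  rw [degree_add_eq_left_of_degree_lt] <;> simp [ht]

theorem monic_X_pow_add_X (ht : 1 < t) : (X ^ t + X : R[X]).Monic :=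
  monic_X_pow_add (by simpa using ht)

theorem degree_X_pow_sub_one_add_one (ht : 1 < t) :
    (X ^ (t - 1) + 1 : R[X]).degree = ↑(t - 1) := by
  rw [← C_1, degree_X_pow_add_C (by omega)]

theorem monic_X_pow_sub_one_add_one (ht : 1 < t) : (X ^ (t - 1) + 1 : R[X]).Monic :=
  monic_X_pow_add (by simp; omega)

end GoppaPolynomials

section Frobenius

variable {F : Type*} [Field F] [Fintype F] {t : ℕ}

theorem one_lt_of_card_eq_sq (hF : Fintype.card F = t ^ 2) : 1 < t := by
  have := hF ▸ Fintype.one_lt_card (α := F)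
  by_contra! h
  interval_cases t <;> simp at this

theorem pow_pow_of_card_eq_sq (hF : Fintype.card F = t ^ 2) (x : F) : (x ^ t) ^ t = x := by
  rw [← pow_mul, ← sq, ← hF, FiniteField.pow_card]

variable {p e : ℕ} [ExpChar F p]

theorem pow_add_self_pow_eq_self (ht : t = p ^ e) (hF : Fintype.card F = t ^ 2) (x : F) :
    (x ^ t + x) ^ t = x ^ t + x := by
  rw [ht, add_pow_expChar_pow, ← ht, pow_pow_of_card_eq_sq hF, add_comm]

theorem pow_add_self_pow_sub_one_eq_one (ht : t = p ^ e) (hF : Fintype.card F = t ^ 2) {x : F}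
    (hx : x ^ t + x ≠ 0) : (x ^ t + x) ^ (t - 1) = 1 := by
  refine mul_right_cancel₀ hx ?_
  rw [← pow_succ, Nat.sub_add_cancel (one_lt_of_card_eq_sq hF).le, one_mul,
    pow_add_self_pow_eq_self ht hF]

theorem X_pow_add_X_mul_pow_sub_one (ht : t = p ^ e) (hF : Fintype.card F = t ^ 2) :
    (X ^ t + X : F[X]) * ((X ^ t + X) ^ (t - 1) - 1) = X ^ Fintype.card F - X := by
  rw [mul_sub, mul_one, ← pow_succ', Nat.sub_add_cancel (one_lt_of_card_eq_sq hF).le, ht,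
    add_pow_expChar_pow, ← ht, ← pow_mul, hF, sq]
  ring

theorem prod_X_sub_C_eq_X_pow_add_X_pow_sub_one {n : ℕ} {α : Fin n → F} (ht : t = p ^ e)
    (hF : Fintype.card F = t ^ 2) (hα : Function.Injective α)
    (hrange : ∀ x : F, x ∈ Set.range α ↔ x ^ t + x ≠ 0) :
    ∏ k, (X - C (α k)) = (X ^ t + X) ^ (t - 1) - 1 := by
  classical
  have ht1 := one_lt_of_card_eq_sq hF
  have hW : (X ^ t + X : F[X]).Monic := monic_X_pow_add_X ht1
  have himage : univ.image α = univ.filter fun x => ¬ (X ^ t + X : F[X]).IsRoot x := by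
    ext x
    simp [← hrange x]
  rw [← prod_image (f := fun x => X - C x) fun k _ l _ h => hα h, himage]
  refine FiniteField.prod_X_sub_C_filter_not_isRoot ((hW.pow _).sub_of_left ?_)
    (X_pow_add_X_mul_pow_sub_one ht hF)
  rw [degree_one, degree_pow, degree_X_pow_add_X ht1, nsmul_eq_mul]
  exact_mod_cast Nat.mul_pos (by omega) (by omega)

end Frobenius

section Cofactor

variable {R : Type*} [CommRing R] (t : ℕ) (a : R)

noncomputable def locatorCofactor : R[X] := 1 + ∑ s ∈ range t, C (a ^ (t - 1 - s)) * X ^ s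

theorem X_sub_C_mul_locatorCofactor :
    (X - C a) * locatorCofactor t a = X ^ t + X - C (a ^ t + a) := by
  have hsum : ∑ s ∈ range t, C (a ^ (t - 1 - s)) * X ^ s =
      ∑ s ∈ range t, X ^ s * C a ^ (t - 1 - s) :=
    sum_congr rfl fun s _ => by rw [C_pow, mul_comm]
  rw [locatorCofactor, hsum, C_add, C_pow]
  linear_combination geom_sum₂_mul X (C a) t

theorem degree_locatorCofactor_le : (locatorCofactor t a).degree ≤ ↑(t - 1) := by
  refine (degree_add_le _ _).trans (max_le (degree_one_le.trans (by simp)) ?_)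
  refine (degree_sum_le _ _).trans (Finset.sup_le fun s hs => ?_)
  refine degree_C_mul_X_pow_le _ _ |>.trans ?_
  exact_mod_cast Nat.le_sub_one_of_lt (mem_range.1 hs)

theorem coeff_locatorCofactor {d : ℕ} (hd : 1 ≤ d) (hdt : d < t) :
    (locatorCofactor t a).coeff d = a ^ (t - 1 - d) := by
  simp only [locatorCofactor, coeff_add, coeff_one, finsetSum_coeff, coeff_C_mul_X_pow]
  rw [if_neg (by omega), zero_add, sum_ite_eq (range t) d, if_pos (mem_range.2 hdt)]

end Cofactor

theorem sum_pow_succ_mul_pow_mul_sub {R : Type*} [CommRing R] {u y : R} (h : u * y = 1)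
    (x : R) (i : ℕ) : (∑ m ∈ range i, u ^ (m + 1) * x ^ m) * (x - y) = u ^ i * x ^ i - 1 := by
  induction i with
  | zero => simp
  | succ i ih =>
    rw [sum_range_succ]
    linear_combination ih - u ^ i * x ^ i * h

section Expansion

variable {F : Type*} [Field F] {t : ℕ}

theorem pow_dvd_sub_wadicExpansion {a : F} {Q : F[X]} {i : ℕ} (hβ : (a ^ t + a) ^ (t - 1) = 1)
    (hit : i < t) (hQ : (X - C a) * Q = (X ^ t + X) ^ (t - 1) - 1) :
    (X ^ t + X) ^ i ∣
      Q - (∑ m ∈ range i, C ((a ^ t + a)⁻¹ ^ (m + 1)) * (X ^ t + X) ^ m) *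
        locatorCofactor t a := by
  obtain rfl | hi := i.eq_zero_or_pos
  · simp
  set β := a ^ t + a
  set W : F[X] := X ^ t + X
  have hβ0 : β ≠ 0 := by
    rintro h
    rw [h, zero_pow (by omega)] at hβ
    exact zero_ne_one hβ
  have htel := sum_pow_succ_mul_pow_mul_sub (x := W) (show C β⁻¹ * C β = 1 by
    rw [← C_mul, inv_mul_cancel₀ hβ0, C_1]) i
  simp only [← C_pow] at htel
  obtain ⟨d, hd⟩ : X - C a ∣ W ^ (t - 1 - i) - C (β⁻¹ ^ i) := by
    rw [dvd_iff_isRoot]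
    simp [W, pow_sub₀ _ hβ0 (show i ≤ t - 1 by omega), hβ, β]
  have hpow : W ^ (t - 1) = W ^ i * W ^ (t - 1 - i) := by
    rw [← pow_add, Nat.add_sub_cancel' (by omega)]
  refine ⟨d, mul_left_cancel₀ (X_sub_C_ne_zero a) ?_⟩
  linear_combination hQ - (∑ m ∈ range i, C (β⁻¹ ^ (m + 1)) * W ^ m) *
    X_sub_C_mul_locatorCofactor t a - htel + hpow + W ^ i * hd

end Expansion

section Syndrome

variable {F : Type*} [Field F] {t n : ℕ}

noncomputable def wadicSum (t : ℕ) (σ : ℕ → F[X]) (i : ℕ) : F[X] :=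
  ∑ m ∈ range i, (X ^ t + X) ^ m * σ (m + 1)

noncomputable def syndromeDigit (t : ℕ) (α b : Fin n → F) (m : ℕ) : F[X] :=
  ∑ k, C (b k * (α k ^ t + α k)⁻¹ ^ m) * locatorCofactor t (α k)

theorem pow_dvd_goppaSum_sub_wadicSum {K : Type*} [Field K] [Algebra K F] {α : Fin n → F}
    (c : Fin n → K) {i : ℕ} (hprod : ∏ k, (X - C (α k)) = (X ^ t + X) ^ (t - 1) - 1)
    (hβ : ∀ k, (α k ^ t + α k) ^ (t - 1) = 1) (hit : i < t) :
    (X ^ t + X) ^ i ∣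
      goppaSum α c - wadicSum t (syndromeDigit t α fun k => algebraMap K F (c k)) i := by
  classical
  have hT : wadicSum t (syndromeDigit t α fun k => algebraMap K F (c k)) i =
      ∑ k, C (algebraMap K F (c k)) * ((∑ m ∈ range i,
        C ((α k ^ t + α k)⁻¹ ^ (m + 1)) * (X ^ t + X) ^ m) * locatorCofactor t (α k)) := by
    simp only [wadicSum, syndromeDigit, mul_sum, sum_mul, C_mul]
    rw [sum_comm]
    exact sum_congr rfl fun _ _ => sum_congr rfl fun _ _ => by ring
  rw [goppaSum, hT, ← sum_sub_distrib]
  refine dvd_sum fun k _ => ?_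
  rw [← mul_sub]
  refine dvd_mul_of_dvd_right (pow_dvd_sub_wadicExpansion (hβ k) hit ?_) _
  rw [mul_prod_erase univ (fun j => X - C (α j)) (mem_univ k), hprod]

end Syndrome

section Coefficients

variable {F : Type*} [Field F] {t : ℕ} {w w' s : F[X]} {j : ℕ}

theorem coeff_X_pow_sub_one_add_one_mul (w : F[X]) (k : ℕ) :
    ((X ^ (t - 1) + 1) * w).coeff k =
      (if t - 1 ≤ k then w.coeff (k - (t - 1)) else 0) + w.coeff k := by
  rw [add_mul, one_mul, coeff_add, mul_comm, coeff_mul_X_pow']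

theorem coeff_eq_of_X_pow_sub_one_add_one_mul_sub_eq
    (h : (X ^ (t - 1) + 1) * w' - w = X ^ j * s) {k : ℕ} (hkj : k < j) (hkt : k < t - 1) :
    w'.coeff k = w.coeff k := by
  have hk := congrArg (coeff · k) h
  simp only [coeff_sub, coeff_X_pow_sub_one_add_one_mul, mul_comm (X ^ j), coeff_mul_X_pow',
    if_neg (show ¬ t - 1 ≤ k by omega), if_neg (show ¬ j ≤ k by omega), zero_add] at hk
  exact sub_eq_zero.1 hk

theorem coeff_eq_coeff_of_X_pow_sub_one_add_one_mul_sub_eq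
    (h : (X ^ (t - 1) + 1) * w' - w = X ^ j * s) (hw' : w'.degree < ↑(j + 1))
    (hw : w.degree < ↑j) {r : ℕ} (hrj : r ≤ j) (hrt : r + 1 < t) :
    w'.coeff (j - r) = s.coeff (t - 1 - r) := by
  have hw'0 : w'.coeff (t - 1 - r + j) = 0 :=
    coeff_eq_zero_of_degree_lt (hw'.trans_le (by norm_cast; omega))
  have hw0 : w.coeff (t - 1 - r + j) = 0 :=
    coeff_eq_zero_of_degree_lt (hw.trans_le (by norm_cast; omega))
  have hk := congrArg (coeff · (t - 1 - r + j)) h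
  simpa only [coeff_sub, coeff_X_pow_sub_one_add_one_mul, mul_comm (X ^ j), coeff_mul_X_pow',
    if_pos (show t - 1 ≤ t - 1 - r + j by omega), if_pos (show j ≤ t - 1 - r + j by omega),
    show t - 1 - r + j - (t - 1) = j - r by omega, Nat.add_sub_cancel, hw'0, hw0, add_zero,
    sub_zero] using hk

end Coefficients

section WAdic

variable {F : Type*} [Field F] {t : ℕ} {σ : ℕ → F[X]}

noncomputable def wadicQuotient (t : ℕ) (σ : ℕ → F[X]) (j : ℕ) : F[X] :=
  wadicSum t σ j / (X ^ (t - 1) + 1) ^ j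

theorem degree_wadicSum_lt (ht : 1 < t) (hσ : ∀ m, (σ m).degree ≤ ↑(t - 1)) (j : ℕ) :
    (wadicSum t σ j).degree < ↑(j * t) := by
  refine (degree_sum_le _ _).trans_lt ((Finset.sup_lt_iff (WithBot.bot_lt_coe _)).2 fun m hm => ?_)
  refine (degree_mul_le _ _).trans_lt ?_
  rw [degree_pow, degree_X_pow_add_X ht, nsmul_eq_mul]
  refine (add_le_add le_rfl (hσ (m + 1))).trans_lt ?_
  have : (m + 1) * t ≤ j * t := Nat.mul_le_mul_right t (mem_range.1 hm)
  exact_mod_cast (by rw [add_mul] at this; omega : m * t + (t - 1) < j * t)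

theorem wadicSum_mul_wadicQuotient (ht : 1 < t) {j : ℕ}
    (h : (X ^ (t - 1) + 1) ^ j ∣ wadicSum t σ j) :
    (X ^ (t - 1) + 1) ^ j * wadicQuotient t σ j = wadicSum t σ j :=
  EuclideanDomain.mul_div_cancel' ((monic_X_pow_sub_one_add_one ht).pow j).ne_zero h

theorem pow_dvd_wadicSum_of_le (ht : 1 ≤ t) {i j : ℕ} (hji : j ≤ i)
    (h : (X ^ (t - 1) + 1) ^ i ∣ wadicSum t σ i) :
    (X ^ (t - 1) + 1) ^ j ∣ wadicSum t σ j := by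
  obtain ⟨d, rfl⟩ := Nat.exists_eq_add_of_le hji
  have hsplit : wadicSum t σ (j + d) = wadicSum t σ j +
      (X ^ t + X) ^ j * ∑ m ∈ range d, (X ^ t + X) ^ m * σ (j + m + 1) := by
    simp only [wadicSum, sum_range_add, mul_sum, pow_add, mul_assoc, add_assoc]
  rw [hsplit] at h
  exact (dvd_add_left ((X_pow_sub_one_add_one_pow_dvd ht j).mul_right _)).1
    ((pow_dvd_pow _ (by omega)).trans h)

theorem degree_wadicQuotient_lt (ht : 1 < t) (hσ : ∀ m, (σ m).degree ≤ ↑(t - 1)) {j : ℕ}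
    (h : (X ^ (t - 1) + 1) ^ j ∣ wadicSum t σ j) : (wadicQuotient t σ j).degree < j := by
  have hdeg := degree_wadicSum_lt ht hσ j
  rw [← wadicSum_mul_wadicQuotient ht h, degree_mul, degree_pow,
    degree_X_pow_sub_one_add_one ht, nsmul_eq_mul] at hdeg
  by_cases hw : wadicQuotient t σ j = 0
  · simp [hw]
  rw [degree_eq_natDegree hw] at hdeg ⊢
  have : j * (t - 1) + (wadicQuotient t σ j).natDegree < j * t := by exact_mod_cast hdeg
  have : j * t = j * (t - 1) + j := by rw [← Nat.mul_succ]; congr; omega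
  exact_mod_cast (by omega : (wadicQuotient t σ j).natDegree < j)

theorem mul_wadicQuotient_succ_sub (ht : 1 < t) {j : ℕ}
    (h : (X ^ (t - 1) + 1) ^ (j + 1) ∣ wadicSum t σ (j + 1))
    (h' : (X ^ (t - 1) + 1) ^ j ∣ wadicSum t σ j) :
    (X ^ (t - 1) + 1) * wadicQuotient t σ (j + 1) - wadicQuotient t σ j = X ^ j * σ (j + 1) := by
  refine mul_left_cancel₀ (((monic_X_pow_sub_one_add_one ht).pow j).ne_zero (R := F)) ?_
  have hsucc : wadicSum t σ (j + 1) = wadicSum t σ j + (X ^ t + X) ^ j * σ (j + 1) :=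
    sum_range_succ _ _
  rw [← wadicSum_mul_wadicQuotient ht h, ← wadicSum_mul_wadicQuotient ht h',
    ← X_mul_X_pow_sub_one_add_one ht.le, mul_pow, pow_succ] at hsucc
  linear_combination hsucc

theorem coeff_wadicQuotient_of_lt {i : ℕ} (hit : i + 1 < t)
    (h : (X ^ (t - 1) + 1) ^ i ∣ wadicSum t σ i) {j s : ℕ} (hsj : s < j) (hji : j ≤ i) :
    (wadicQuotient t σ j).coeff s = (wadicQuotient t σ i).coeff s := by
  induction i, hji using Nat.le_induction with
  | base => rfl
  | succ k hjk ih =>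
    rw [ih (by omega) (pow_dvd_wadicSum_of_le (by omega) k.le_succ h)]
    exact (coeff_eq_of_X_pow_sub_one_add_one_mul_sub_eq (mul_wadicQuotient_succ_sub (by omega) h
      (pow_dvd_wadicSum_of_le (by omega) k.le_succ h)) (by omega) (by omega)).symm

theorem coeff_wadicQuotient {i : ℕ} (hit : i + 1 < t) (hσ : ∀ m, (σ m).degree ≤ ↑(t - 1))
    (h : (X ^ (t - 1) + 1) ^ i ∣ wadicSum t σ i) {j r : ℕ} (hrj : r ≤ j) (hji : j < i) :
    (wadicQuotient t σ i).coeff (j - r) = (σ (j + 1)).coeff (t - 1 - r) := by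
  have hdvd (k : ℕ) (hk : k ≤ i) := pow_dvd_wadicSum_of_le (by omega) hk h
  rw [← coeff_wadicQuotient_of_lt hit h (by omega) hji]
  exact coeff_eq_coeff_of_X_pow_sub_one_add_one_mul_sub_eq
    (mul_wadicQuotient_succ_sub (by omega) (hdvd _ hji) (hdvd _ hji.le))
    (degree_wadicQuotient_lt (by omega) hσ (hdvd _ hji))
    (degree_wadicQuotient_lt (by omega) hσ (hdvd _ hji.le)) hrj (by omega)

end WAdic

section Moments

variable {F : Type*} [Field F] {t n : ℕ} (α b : Fin n → F)

def goppaMoment (t : ℕ) (j r : ℕ) : F := ∑ k, b k * (α k ^ t + α k)⁻¹ ^ j * α k ^ r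

theorem degree_syndromeDigit_le (m : ℕ) : (syndromeDigit t α b m).degree ≤ ↑(t - 1) :=
  (degree_sum_le _ _).trans <| Finset.sup_le fun k _ =>
    (degree_mul_le _ _).trans <| (add_le_add degree_C_le (degree_locatorCofactor_le t _)).trans
      (by rw [zero_add])

theorem coeff_syndromeDigit {r : ℕ} (hrt : r + 1 < t) (m : ℕ) :
    (syndromeDigit t α b m).coeff (t - 1 - r) = goppaMoment α b t m r := by
  simp only [syndromeDigit, goppaMoment, finsetSum_coeff, coeff_C_mul]
  refine sum_congr rfl fun k _ => ?_
  rw [coeff_locatorCofactor t _ (by omega) (by omega), Nat.sub_sub_self (by omega)]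

variable {α b} [Fintype F] {p e : ℕ} [ExpChar F p]

theorem goppaMoment_pow (ht : t = p ^ e) (hF : Fintype.card F = t ^ 2)
    (hb : ∀ k, b k ^ t = b k) (hβ : ∀ k, α k ^ t + α k ≠ 0) {i r : ℕ} (hri : r ≤ i) :
    goppaMoment α b t i r ^ t = ∑ m ∈ range (r + 1),
      (-1) ^ (m + r) * (r.choose m : F) * goppaMoment α b t (i - m) (r - m) := by
  have hfrob (x : F) : x ^ t = iterateFrobenius F p e x := by rw [iterateFrobenius_def, ht]
  calc goppaMoment α b t i r ^ t
      = ∑ k, b k * (α k ^ t + α k)⁻¹ ^ i * ((α k ^ t + α k) - α k) ^ r := by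
        rw [hfrob, goppaMoment, map_sum]
        refine sum_congr rfl fun k _ => ?_
        rw [map_mul, map_mul, map_pow, map_pow, map_inv₀, ← hfrob, ← hfrob, ← hfrob, hb,
          pow_add_self_pow_eq_self ht hF, add_sub_cancel_right]
    _ = ∑ k, ∑ m ∈ range (r + 1), (-1) ^ (m + r) * (r.choose m : F) *
          (b k * (α k ^ t + α k)⁻¹ ^ (i - m) * α k ^ (r - m)) := by
        refine sum_congr rfl fun k _ => ?_
        rw [sub_pow, mul_sum]
        refine sum_congr rfl fun m hm => ?_
        rw [pow_sub₀ _ (inv_ne_zero (hβ k)) ((Nat.lt_succ_iff.1 (mem_range.1 hm)).trans hri)]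
        simp only [inv_pow, inv_inv]
        ring
    _ = _ := by
        rw [sum_comm]
        simp only [goppaMoment, mul_sum]

theorem eq_zero_of_goppaMoment_eq (ht : t = p ^ e) (hF : Fintype.card F = t ^ 2)
    (hb : ∀ k, b k ^ t = b k) (hβ : ∀ k, α k ^ t + α k ≠ 0) {i : ℕ} (a : ℕ → F)
    (ha : ∀ j r, r < j → j ≤ i → goppaMoment α b t j r = a (j - 1 - r)) {r : ℕ} (hr : 1 ≤ r)
    (hri : r < i) : a (i - 1 - r) = 0 := by
  have hpow : goppaMoment α b t i r ^ t = 0 := by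
    rw [goppaMoment_pow ht hF hb hβ hri.le]
    calc _ = ∑ m ∈ range (r + 1), (-1) ^ (m + r) * (r.choose m : F) * a (i - 1 - r) :=
          sum_congr rfl fun m hm => by
            have := mem_range.1 hm
            rw [ha (i - m) (r - m) (by omega) (by omega),
              show i - m - 1 - (r - m) = i - 1 - r by omega]
      _ = (1 - 1) ^ r * a (i - 1 - r) := by simp only [sub_pow, one_pow, mul_one, sum_mul]
      _ = 0 := by rw [sub_self, zero_pow (by omega), zero_mul]
  rw [← ha i r (by omega) le_rfl]
  exact pow_eq_zero_iff (one_lt_of_card_eq_sq hF).ne_bot |>.1 hpow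

end Moments

section Main

variable {F : Type*} [Field F] [Fintype F] {p e t n : ℕ} [ExpChar F p] {α b : Fin n → F}

theorem wadicQuotient_syndromeDigit (ht : t = p ^ e) (hF : Fintype.card F = t ^ 2)
    (hb : ∀ k, b k ^ t = b k) (hβ : ∀ k, α k ^ t + α k ≠ 0) {i : ℕ} (hi : 1 ≤ i)
    (hit : i + 1 < t) (h : (X ^ (t - 1) + 1) ^ i ∣ wadicSum t (syndromeDigit t α b) i) :
    wadicQuotient t (syndromeDigit t α b) i = C (goppaMoment α b t i 0) * X ^ (i - 1) := by
  set w := wadicQuotient t (syndromeDigit t α b) i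
  have hcoeff (j r : ℕ) (hrj : r < j) (hji : j ≤ i) :
      goppaMoment α b t j r = w.coeff (j - 1 - r) := by
    obtain ⟨j, rfl⟩ : ∃ j', j = j' + 1 := ⟨j - 1, by omega⟩
    rw [coeff_wadicQuotient hit (degree_syndromeDigit_le α b) h (by omega) (by omega),
      coeff_syndromeDigit α b (by omega), Nat.add_sub_cancel]
  ext s
  rw [coeff_C_mul_X_pow]
  split_ifs with hs
  · rw [hs, hcoeff i 0 (by omega) le_rfl, Nat.sub_zero]
  rcases lt_or_gt_of_ne hs with hlt | hgt
  · have := eq_zero_of_goppaMoment_eq ht hF hb hβ w.coeff hcoeff (r := i - 1 - s) (by omega)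
      (by omega)
    rwa [Nat.sub_sub_self hlt.le] at this
  · exact coeff_eq_zero_of_degree_lt ((degree_wadicQuotient_lt (by omega)
      (degree_syndromeDigit_le α b) h).trans_le (by exact_mod_cast (by omega : i ≤ s)))

theorem pow_X_pow_add_X_dvd_goppaSum_iff {K : Type*} [Field K] [Algebra K F] (ht : t = p ^ e)
    (hF : Fintype.card F = t ^ 2) (hα : Function.Injective α)
    (hrange : ∀ x : F, x ∈ Set.range α ↔ x ^ t + x ≠ 0) {i : ℕ} (hi : 1 ≤ i) (hit : i + 1 < t)
    (c : Fin n → K) (hc : ∀ k, algebraMap K F (c k) ^ t = algebraMap K F (c k)) :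
    (X ^ t + X) ^ i ∣ goppaSum α c ↔ (X ^ (t - 1) + 1) ^ i ∣ goppaSum α c ∧
      ∑ k, algebraMap K F (c k) * ((α k ^ t + α k) ^ i)⁻¹ = 0 := by
  set T := wadicSum t (syndromeDigit t α fun k => algebraMap K F (c k)) i
  have hβ (k : Fin n) : α k ^ t + α k ≠ 0 := (hrange _).1 ⟨k, rfl⟩
  have hcong : (X ^ t + X) ^ i ∣ goppaSum α c - T :=
    pow_dvd_goppaSum_sub_wadicSum c (prod_X_sub_C_eq_X_pow_add_X_pow_sub_one ht hF hα hrange)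
      (fun k => pow_add_self_pow_sub_one_eq_one ht hF (hβ k)) (by omega)
  have hW : (X ^ t + X) ^ i ∣ T ↔ T = 0 := by
    refine ⟨fun h => eq_zero_of_dvd_of_degree_lt h ?_, fun h => h ▸ dvd_zero _⟩
    rw [degree_pow, degree_X_pow_add_X (by omega), nsmul_eq_mul]
    exact_mod_cast degree_wadicSum_lt (t := t) (by omega) (degree_syndromeDigit_le _ _) i
  have hV (h : (X ^ (t - 1) + 1) ^ i ∣ T) : T = (X ^ (t - 1) + 1) ^ i *
      (C (goppaMoment α (fun k => algebraMap K F (c k)) t i 0) * X ^ (i - 1)) := by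
    rw [← wadicQuotient_syndromeDigit ht hF hc hβ hi (by omega) h,
      wadicSum_mul_wadicQuotient (by omega) h]
  have hcheck : goppaMoment α (fun k => algebraMap K F (c k)) t i 0 =
      ∑ k, algebraMap K F (c k) * ((α k ^ t + α k) ^ i)⁻¹ := by
    simp [goppaMoment, inv_pow]
  rw [dvd_iff_dvd_of_dvd_sub hcong,
    dvd_iff_dvd_of_dvd_sub ((X_pow_sub_one_add_one_pow_dvd (by omega) i).trans hcong), hW,
    ← hcheck]
  constructor
  · intro h0
    refine ⟨h0 ▸ dvd_zero _, ?_⟩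
    have hV0 : (X ^ (t - 1) + 1 : F[X]) ≠ 0 := (monic_X_pow_sub_one_add_one (by omega)).ne_zero
    simpa [h0, eq_comm (a := (0 : F[X])), hV0] using hV (h0 ▸ dvd_zero _)
  · rintro ⟨hdvd, h0⟩
    rw [hV hdvd, h0, C_0, zero_mul, mul_zero]

end Main

/-- with `t = q^l`, `F = GF(t²)` and `L` enumerating
`{α ∈ F : α ≠ 0 ∧ α^{t−1} + 1 ≠ 0}`, for `1 ≤ i ≤ q − 2` a word `c` lies in
`Γ(L, (X^t + X)^i)` iff it lies in `Γ(L, (X^{t−1} + 1)^i)` and satisfies the extra parity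
check `Σₖ cₖ (αₖ^t + αₖ)^{−i} = 0`. -/
theorem goppa_G2_iff_G1_and_check {K F : Type*} [Field K] [Fintype K]
    [Field F] [Fintype F] [Algebra K F]
    (q l : ℕ) (hq : Fintype.card K = q) (hl : 1 ≤ l)
    (hF : Fintype.card F = (q ^ l) ^ 2)
    {n : ℕ} (α : Fin n → F) (hα : Function.Injective α)
    (hrange : ∀ x : F, x ∈ Set.range α ↔ (x ≠ 0 ∧ x ^ (q ^ l - 1) + 1 ≠ 0))
    (i : ℕ) (hi1 : 1 ≤ i) (hi2 : i ≤ q - 2) (c : Fin n → K) :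
    ((Polynomial.X ^ (q ^ l) + Polynomial.X) ^ i ∣ goppaSum α c) ↔
      (((Polynomial.X ^ (q ^ l - 1) + 1) ^ i ∣ goppaSum α c) ∧
        ∑ k, algebraMap K F (c k) * ((α k ^ (q ^ l) + α k) ^ i)⁻¹ = 0) := by
  obtain ⟨p, hchar⟩ := CharP.exists K
  have : Fact p.Prime := ⟨CharP.char_is_prime K p⟩
  have : CharP F p := charP_of_injective_algebraMap (algebraMap K F).injective p
  obtain ⟨a, -, hcard⟩ := FiniteField.card K p
  have hq2 : 2 ≤ q := hq ▸ Fintype.one_lt_card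
  have hqt : q ≤ q ^ l := Nat.le_self_pow (by omega) q
  have hrange' (x : F) : x ∈ Set.range α ↔ x ^ q ^ l + x ≠ 0 := by
    rw [hrange, ← mul_ne_zero_iff, mul_add, mul_one, ← pow_succ',
      Nat.sub_add_cancel (Nat.one_le_pow _ _ (by omega))]
  refine pow_X_pow_add_X_dvd_goppaSum_iff (p := p) (e := a * l) ?_ hF hα hrange' hi1 (by omega) c
    fun k => by rw [← map_pow, ← hq, FiniteField.pow_card_pow]
  rw [← hq, hcard, pow_mul]
end

section
/- Let q be a prime power, l ≥ 1, t = q^l, and F = GF(t²) (so GF(q) ⊆ GF(t) ⊆ F). Let β ∈ F satisfy β^t + β = −1. Let L₂ = {α ∈ F : α^t + α ≠ 0} and L₃ = {α ∈ F : α^t + α + 1 ≠ 0}. Then the map α ↦ α + β is a bijection from L₂ onto L₃, and for every integer i ≥ 1 and every c : L₂ → GF(q), the vector c belongs to Γ(L₂, (X^t + X)^i) if and only if the vector c' : L₃ → GF(q) defined by c'(α + β) = c(α) belongs to Γ(L₃, (X^t + X + 1)^i). -/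
open Polynomial

/-- The syndrome polynomial `Σ_{a ∈ s} c(a) ∏_{b ∈ s, b ≠ a} (X − b)` of a word
`c : s → GF(q)` (given as a function on `F`) with respect to the locator set `s ⊆ F`. -/
noncomputable def goppaSumS {K F : Type*} [Field K] [Field F] [Algebra K F] [DecidableEq F]
    (s : Finset F) (c : F → K) : Polynomial F :=
  ∑ a ∈ s, Polynomial.C (algebraMap K F (c a)) *
    ∏ b ∈ s.erase a, (Polynomial.X - Polynomial.C b)

/-- with `t = q^l`, `F = GF(t²)`, and `β ∈ F` with `β^t + β = −1`, the map
`α ↦ α + β` is a bijection from `L₂ = {α : α^t + α ≠ 0}` onto `L₃ = {α : α^t + α + 1 ≠ 0}`,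
and it carries the code `Γ(L₂, (X^t + X)^i)` onto the code `Γ(L₃, (X^t + X + 1)^i)`. -/
theorem goppa_G2_equiv_G3 {K F : Type*} [Field K] [Fintype K]
    [Field F] [Fintype F] [DecidableEq F] [Algebra K F]
    (q l : ℕ) (hq : Fintype.card K = q) (hl : 1 ≤ l)
    (hF : Fintype.card F = (q ^ l) ^ 2)
    (β : F) (hβ : β ^ (q ^ l) + β = -1) :
    Set.BijOn (fun a => a + β)
      {a : F | a ^ (q ^ l) + a ≠ 0} {a : F | a ^ (q ^ l) + a + 1 ≠ 0} ∧
    ∀ i : ℕ, 1 ≤ i → ∀ c : F → K,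
      (((Polynomial.X ^ (q ^ l) + Polynomial.X) ^ i ∣
          goppaSumS (Finset.univ.filter fun a : F => a ^ (q ^ l) + a ≠ 0) c) ↔
        ((Polynomial.X ^ (q ^ l) + Polynomial.X + 1) ^ i ∣
          goppaSumS (Finset.univ.filter fun a : F => a ^ (q ^ l) + a + 1 ≠ 0)
            (fun x => c (x - β)))) := by
  classical
  set t := q ^ l with ht
  -- the characteristic
  set p := ringChar F with hpdef
  haveI : CharP F p := ringChar.charP F
  obtain ⟨n, hp, hFcard⟩ := FiniteField.card F p
  haveI : Fact p.Prime := ⟨hp⟩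
  haveI : CharP F[X] p := charP_of_injective_ringHom (Polynomial.C_injective (R := F)) p
  have ht2 : t ^ 2 = p ^ (n : ℕ) := by rw [← hF, hFcard]
  have htdvd : t ∣ p ^ (n : ℕ) := ht2 ▸ dvd_pow_self t (two_ne_zero)
  obtain ⟨m, -, htm⟩ := (Nat.dvd_prime_pow hp).mp htdvd
  -- Frobenius identities
  have key : ∀ x y : F, (x + y) ^ t = x ^ t + y ^ t := by
    intro x y; rw [htm, add_pow_char_pow]
  have keysub : ∀ x y : F, (x - y) ^ t = x ^ t - y ^ t := by
    intro x y; rw [htm, sub_pow_char_pow]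
  have keysubP : ((X : F[X]) - C β) ^ t = X ^ t - C β ^ t := by
    rw [htm, sub_pow_char_pow]
  have hinj : Function.Injective (· + β : F → F) := add_left_injective β
  -- the locator sets correspond under translation by β
  have himg : (Finset.univ.filter fun a : F => a ^ t + a + 1 ≠ 0)
      = (Finset.univ.filter fun a : F => a ^ t + a ≠ 0).image (· + β) := by
    ext b
    simp only [Finset.mem_image, Finset.mem_filter, Finset.mem_univ, true_and]
    constructor
    · intro hb
      exact ⟨b - β, fun h => hb (by linear_combination h - keysub b β + hβ), by ring⟩
    · rintro ⟨a, ha, rfl⟩ h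
      exact ha (by linear_combination h - key a β - hβ)
  -- syndrome polynomials correspond under composition with X - β
  have hS : ∀ c : F → K,
      goppaSumS (Finset.univ.filter fun a : F => a ^ t + a + 1 ≠ 0) (fun x => c (x - β))
        = (goppaSumS (Finset.univ.filter fun a : F => a ^ t + a ≠ 0) c).comp
            (X - Polynomial.C β) := by
    intro c
    rw [himg]
    unfold goppaSumS
    rw [Finset.sum_image (fun a _ b _ h => hinj h)]
    simp only [← Polynomial.coe_compRingHom_apply, map_sum, map_mul, map_prod]
    refine Finset.sum_congr rfl fun a _ => ?_
    rw [← Finset.image_erase hinj, Finset.prod_image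
      (fun x _ y _ h => hinj h)]
    simp only [Polynomial.coe_compRingHom_apply, Polynomial.sub_comp,
      Polynomial.X_comp, Polynomial.C_comp, add_sub_cancel_right]
    refine congrArg _ (Finset.prod_congr rfl fun b _ => ?_)
    rw [Polynomial.C_add]; ring
  -- the Goppa polynomials correspond under composition with X - β
  have hG : ((X : F[X]) ^ t + X + 1) = ((X : F[X]) ^ t + X).comp (X - Polynomial.C β) := by
    rw [Polynomial.add_comp, Polynomial.pow_comp, Polynomial.X_comp, keysubP]
    have hC : (C (β ^ t) : F[X]) + C β + 1 = 0 := by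
      have : (C (β ^ t + β) : F[X]) = C (-1 : F) := by rw [hβ]
      rw [Polynomial.C_add] at this
      rw [this]; simp
    rw [← Polynomial.C_pow]
    linear_combination hC
  -- divisibility transfers along composition
  have hdvdcomp : ∀ (r u v : F[X]), u ∣ v → u.comp r ∣ v.comp r := by
    rintro r u v ⟨w, rfl⟩
    exact ⟨w.comp r, Polynomial.mul_comp u w r⟩
  have hcancel : ∀ u : F[X], (u.comp (X - Polynomial.C β)).comp (X + Polynomial.C β) = u := by
    intro u
    rw [Polynomial.comp_assoc]
    simp [Polynomial.sub_comp]
  constructor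
  · refine ⟨?_, ?_, ?_⟩
    · intro a ha h
      exact ha (by linear_combination h - key a β - hβ)
    · intro x _ y _ h
      simpa using hinj h
    · intro b hb
      refine ⟨b - β, fun h => hb (by linear_combination h - keysub b β + hβ), by simp⟩
  · intro i _ c
    rw [hS c, hG, ← Polynomial.pow_comp]
    constructor
    · exact hdvdcomp _ _ _
    · intro h
      have := hdvdcomp (X + Polynomial.C β) _ _ h
      rwa [hcancel, hcancel] at this
end

section
/- Let q be a prime power, l ≥ 1, t = q^l, and F = GF(t²) (so GF(q) ⊆ GF(t) ⊆ F). Let L₃ = {α ∈ F : α^t + α + 1 ≠ 0} (note 0 ∈ L₃), let L₃* = L₃ \ {0}, and let L₄* = {α ∈ F : α ≠ 0 and α^t + α^{t−1} + 1 ≠ 0}. Then the map α ↦ α^{−1} is a bijection from L₃* onto L₄*, and for every integer i with 1 ≤ i ≤ q and every c : L₃* → GF(q), the vector c' : L₄* → GF(q) defined by c'(α^{−1}) = c(α) belongs to Γ(L₄*, (X^t + X^{t−1} + 1)^i) if and only if there exists c₀ ∈ GF(q) such that the extension of c to L₃ taking the value c₀ at 0 belongs to Γ(L₃, (X^t + X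 + 1)^i). In other words, Γ(L₄*, (X^t + X^{t−1} + 1)^i) is, up to the permutation α ↦ α^{−1}, the code obtained from Γ(L₃, (X^t + X + 1)^i) by shortening in the redundancy symbol at the position 0. -/
open Polynomial

/-!
Inversion maps `L₃*` onto `L₄*` because `α⁻ᵗ + α^(1-t) + 1 = α⁻ᵗ (αᵗ + α + 1)`, and it turns the
`L₄*`-syndrome `Σ c(α) ∏_{β ≠ α} (X - β⁻¹)` into a unit times the reversal of
`Q = Σ c(α) α ∏_{β ≠ α} (X - β)`. As `X^t + X^(t-1) + 1` is the reversal of `G = X^t + X + 1`, the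
`L₄*` condition reads `G^i ∣ Q`. The `L₃`-syndrome of the extension by `c₀` is
`(c₀ + Σ c(α)) ∏ (X - β) + Q`, so everything reduces to: every word of `Γ(L₃, G^i)` has coordinate
sum zero. With `v_α = c(α) / G(α)^i`, the Goppa condition gives `Σ v_α α^m = 0` for `m < t i`, and
since `c(α)` and `G(α)` lie in `GF(t)`, `Σ c(α) = Σ v_α α^(t i) = (Σ v_α α^i)^t = 0`.
-/

open Finset

section Syndrome

variable {F : Type*} [Field F] [DecidableEq F]

lemma goppaSumS_algebraMap {K : Type*} [Field K] [Algebra K F] (s : Finset F) (c : F → K) :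
    goppaSumS s c = goppaSumS s fun a => algebraMap K F (c a) := by
  simp [goppaSumS]

lemma natDegree_goppaSumS_le {K : Type*} [Field K] [Algebra K F] (s : Finset F) (c : F → K) :
    (goppaSumS s c).natDegree ≤ #s - 1 := by
  refine natDegree_sum_le_of_forall_le _ _ fun a ha => natDegree_C_mul_le _ _ |>.trans ?_
  simp [card_erase_of_mem ha]

lemma eq_zero_of_sum_Icc_mul_eq_zero {R : Type*} [CommRing R] {N : ℕ} {u μ : ℕ → R}
    (hu : u N = 1) (h : ∀ k < N, ∑ j ∈ Icc (k + 1) N, μ (j - (k + 1)) * u j = 0) :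
    ∀ m < N, μ m = 0 := by
  rcases N with _ | n
  · simp
  intro m
  induction m using Nat.strong_induction_on with
  | _ m ih =>
    intro hm
    have hrow := h (n - m) (by omega)
    rw [sum_Icc_succ_top (by omega), hu, mul_one, show n + 1 - (n - m + 1) = m by omega,
      sum_eq_zero fun j hj => ?_, zero_add] at hrow
    · exact hrow
    · rw [mem_Icc] at hj
      rw [ih _ (by omega) (by omega), zero_mul]

lemma sum_div_eval_mul_pow_eq_zero_of_dvd_goppaSumS {L : Finset F} {w : F → F} {H : F[X]}
    (hH : H.Monic) (hL : ∀ a ∈ L, H.eval a ≠ 0) (hdvd : H ∣ goppaSumS L w) :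
    ∀ m < H.natDegree, ∑ a ∈ L, w a / H.eval a * a ^ m = 0 := by
  intro m hm
  set v : F → F := fun a => w a / H.eval a
  set D := ∑ a ∈ L, C (v a) * (H /ₘ (X - C a))
  have hsyn : goppaSumS L w = H * (∑ a ∈ L, C (v a) * ∏ b ∈ L.erase a, (X - C b))
      - (∏ b ∈ L, (X - C b)) * D := by
    simp only [goppaSumS, Algebra.algebraMap_self, RingHom.id_apply, D, mul_sum,
      ← sum_sub_distrib]
    refine sum_congr rfl fun a ha => ?_
    have hdiv : (X - C a) * (H /ₘ (X - C a)) = H - C (H.eval a) := by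
      rw [X_sub_C_mul_divByMonic_eq_sub_modByMonic, modByMonic_X_sub_C_eq_C_eval]
    rw [← mul_prod_erase L _ ha, ← div_mul_cancel₀ (w a) (hL a ha), C_mul]
    linear_combination (C (v a) * ∏ b ∈ L.erase a, (X - C b)) * hdiv
  have hcop : IsCoprime H (∏ b ∈ L, (X - C b)) := IsCoprime.prod_right fun a ha =>
    ((irreducible_X_sub_C a).coprime_iff_not_dvd.2 fun h => hL a ha (dvd_iff_isRoot.1 h)).symm
  -- `D` is `Σ v_a (H - H(a)) / (X - a)`, congruent to the syndrome modulo `H` but of lower degree.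
  have hD : D = 0 := by
    refine eq_zero_of_dvd_of_natDegree_lt (hcop.dvd_of_dvd_mul_left ?_) ?_
    · rw [eq_sub_iff_add_eq, ← eq_sub_iff_add_eq'] at hsyn
      rw [hsyn]
      exact dvd_sub (dvd_mul_right _ _) hdvd
    · refine lt_of_le_of_lt (natDegree_sum_le_of_forall_le _ _ fun a _ => ?_)
        (Nat.sub_lt (by omega) one_pos)
      refine natDegree_C_mul_le _ _ |>.trans ?_
      rw [natDegree_divByMonic _ (monic_X_sub_C a), natDegree_X_sub_C]
  refine eq_zero_of_sum_Icc_mul_eq_zero (u := H.coeff) (μ := fun n => ∑ a ∈ L, v a * a ^ n)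
    hH.coeff_natDegree (fun k _ => ?_) m hm
  have hk := congrArg (coeff · k) hD
  simp only [D, finsetSum_coeff, coeff_C_mul, coeff_divByMonic_X_sub_C, coeff_zero] at hk
  rw [← hk]
  simp only [sum_mul, mul_sum]
  rw [sum_comm]
  exact sum_congr rfl fun _ _ => sum_congr rfl fun _ _ => by ring

theorem sum_eq_zero_of_dvd_goppaSumS (σ : F →+* F) {t m : ℕ} (hσ : ∀ x, σ x = x ^ t)
    (ht : 2 ≤ t) (hm : 1 ≤ m) {L : Finset F} {w : F → F} {H : F[X]} (hH : H.Monic)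
    (hdeg : H.natDegree = t * m) (hL : ∀ a ∈ L, H.eval a ≠ 0)
    (hHσ : ∀ a ∈ L, σ (H.eval a) = H.eval a) (hwσ : ∀ a ∈ L, σ (w a) = w a)
    (hdvd : H ∣ goppaSumS L w) : ∑ a ∈ L, w a = 0 := by
  have hμ := sum_div_eval_mul_pow_eq_zero_of_dvd_goppaSumS hH hL hdvd
  set N := H.natDegree
  calc ∑ a ∈ L, w a = ∑ a ∈ L, w a / H.eval a * H.eval a :=
        sum_congr rfl fun a ha => (div_mul_cancel₀ _ (hL a ha)).symm
    _ = ∑ j ∈ range (N + 1), H.coeff j * ∑ a ∈ L, w a / H.eval a * a ^ j := by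
        simp only [eval_eq_sum_range, mul_sum]
        rw [sum_comm]
        exact sum_congr rfl fun _ _ => sum_congr rfl fun _ _ => by ring
    _ = ∑ a ∈ L, w a / H.eval a * a ^ N := by
        rw [sum_range_succ, sum_eq_zero fun j hj => by rw [hμ j (mem_range.1 hj), mul_zero],
          hH.coeff_natDegree, zero_add, one_mul]
    _ = σ (∑ a ∈ L, w a / H.eval a * a ^ m) := by
        rw [map_sum]
        refine sum_congr rfl fun a ha => ?_
        rw [map_mul, map_div₀, hwσ a ha, hHσ a ha, map_pow, hσ, ← pow_mul, hdeg]
    _ = 0 := by rw [hμ m (by nlinarith), map_zero]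

end Syndrome

section Reflect

variable {R : Type*} [CommSemiring R]

lemma reflect_pow (p : R[X]) {d : ℕ} (hp : p.natDegree ≤ d) (n : ℕ) :
    reflect (d * n) (p ^ n) = reflect d p ^ n := by
  induction n with
  | zero => simp [reflect_one]
  | succ n ih =>
    rw [Nat.mul_succ, pow_succ, pow_succ, ← ih,
      ← reflect_mul _ _ (natDegree_pow_le.trans (by rw [mul_comm]; gcongr)) hp]

lemma reflect_X_pow_add_X_add_one {t : ℕ} (ht : 1 ≤ t) :
    reflect t (X ^ t + X + 1 : R[X]) = X ^ t + X ^ (t - 1) + 1 := by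
  have h : (X ^ t + X + 1 : R[X]) = X ^ t + X ^ 1 + X ^ 0 := by rw [pow_one, pow_zero]
  rw [h, reflect_add, reflect_add, reflect_monomial, reflect_monomial, reflect_monomial,
    revAt_le le_rfl, revAt_le ht, revAt_le (Nat.zero_le t), Nat.sub_self, Nat.sub_zero, pow_zero]
  ring

lemma reflect_sum {ι : Type*} (s : Finset ι) (f : ι → R[X]) (N : ℕ) :
    reflect N (∑ i ∈ s, f i) = ∑ i ∈ s, reflect N (f i) := by
  classical
  induction s using Finset.induction_on with
  | empty => simp
  | insert i s hi ih => rw [sum_insert hi, sum_insert hi, reflect_add, ih]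

variable [NoZeroDivisors R]

lemma reflect_dvd_reflect {H Q : R[X]} {d M : ℕ} (hH : H.natDegree = d) (hQ : Q.natDegree ≤ M)
    (h : H ∣ Q) : reflect d H ∣ reflect M Q := by
  obtain ⟨V, rfl⟩ := h
  rcases eq_or_ne (H * V) 0 with h0 | h0
  · rw [h0, reflect_zero]
    exact dvd_zero _
  rw [natDegree_mul (left_ne_zero_of_mul h0) (right_ne_zero_of_mul h0), hH] at hQ
  obtain ⟨M', rfl⟩ : ∃ M', M = d + M' := ⟨M - d, by omega⟩
  rw [reflect_mul _ _ hH.le (by omega : V.natDegree ≤ M')]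
  exact dvd_mul_right _ _

lemma reflect_dvd_reflect_iff {H Q : R[X]} {d M : ℕ} (hH : H.natDegree = d) (hH0 : H.coeff 0 ≠ 0)
    (hQ : Q.natDegree ≤ M) : reflect d H ∣ reflect M Q ↔ H ∣ Q := by
  refine ⟨fun h => ?_, reflect_dvd_reflect hH hQ⟩
  have hdeg : (reflect d H).natDegree = d := by
    refine le_antisymm (natDegree_reflect_le.trans (max_le le_rfl hH.le))
      (le_natDegree_of_ne_zero ?_)
    rwa [coeff_reflect, revAt_le le_rfl, Nat.sub_self]
  simpa using reflect_dvd_reflect hdeg (natDegree_reflect_le.trans (max_le le_rfl hQ)) h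

end Reflect

section Inversion

variable {F : Type*} [Field F] [DecidableEq F]

lemma prod_X_sub_C_inv {E : Finset F} (hE : 0 ∉ E) :
    ∏ b ∈ E, (X - C b⁻¹) = C (∏ b ∈ E, -b⁻¹) * reflect #E (∏ b ∈ E, (X - C b)) := by
  induction E using Finset.induction_on with
  | empty => simp [reflect_one]
  | @insert a E haE ih =>
    have ha : a ≠ 0 := fun h => hE (h ▸ mem_insert_self a E)
    have hlin : reflect 1 (X - C a) = 1 - C a * X := by
      rw [← pow_one (X : F[X]), ← mul_one (C a), ← pow_zero (X : F[X]), reflect_sub,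
        reflect_monomial, reflect_C_mul_X_pow, revAt_le le_rfl, revAt_le zero_le_one]
      simp
    have hinv : C a⁻¹ * C a = (1 : F[X]) := by rw [← C_mul, inv_mul_cancel₀ ha, C_1]
    rw [prod_insert haE, prod_insert haE, prod_insert haE, card_insert_of_notMem haE, add_comm,
      reflect_mul (X - C a) (∏ b ∈ E, (X - C b)) (natDegree_X_sub_C a).le (by simp),
      ih fun h => hE (mem_insert_of_mem h), hlin, C_mul, map_neg]
    linear_combination (-(C (∏ b ∈ E, -b⁻¹) * reflect #E (∏ b ∈ E, (X - C b)) * X)) * hinv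

variable {K : Type*} [Field K] [Algebra K F]

lemma goppaSumS_image_inv {S : Finset F} (hS : 0 ∉ S) (c : F → K) :
    goppaSumS (S.image (·⁻¹)) (fun x => c x⁻¹)
      = C (-∏ b ∈ S, -b⁻¹) * reflect (#S - 1) (goppaSumS S fun a => algebraMap K F (c a) * a) := by
  simp only [goppaSumS, Algebra.algebraMap_self, RingHom.id_apply]
  rw [sum_image fun x _ y _ h => inv_injective h, reflect_sum, mul_sum]
  refine sum_congr rfl fun a ha => ?_
  have ha0 : a ≠ 0 := ne_of_mem_of_not_mem ha hS
  rw [inv_inv, ← image_erase inv_injective, prod_image fun x _ y _ h => inv_injective h,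
    prod_X_sub_C_inv fun h => hS (mem_of_mem_erase h), card_erase_of_mem ha, reflect_C_mul,
    ← mul_prod_erase S _ ha, ← mul_assoc, ← mul_assoc, ← C_mul, ← C_mul]
  congr 2
  field_simp

lemma goppaSumS_insert_zero {S : Finset F} (hS : 0 ∉ S) (c : F → K) (c₀ : K) :
    goppaSumS (insert 0 S) (fun x => if x = 0 then c₀ else c x)
      = C (algebraMap K F c₀ + ∑ a ∈ S, algebraMap K F (c a)) * ∏ b ∈ S, (X - C b)
        + goppaSumS S fun a => algebraMap K F (c a) * a := by
  simp only [goppaSumS, Algebra.algebraMap_self, RingHom.id_apply]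
  rw [sum_insert hS, erase_insert hS, if_pos rfl, C_add, add_mul, add_assoc, map_sum, sum_mul,
    ← sum_add_distrib]
  congr 1
  refine sum_congr rfl fun a ha => ?_
  have ha0 : a ≠ 0 := ne_of_mem_of_not_mem ha hS
  rw [if_neg ha0, erase_insert_of_ne (Ne.symm ha0), prod_insert fun h => hS (mem_of_mem_erase h),
    ← mul_prod_erase S _ ha, C_mul, C_0, sub_zero]
  ring

end Inversion

section Trinomial

variable {F : Type*} [Field F]

lemma natDegree_X_pow_add_X_add_one {t : ℕ} (ht : 2 ≤ t) :
    (X ^ t + X + 1 : F[X]).natDegree = t := by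
  compute_degree!
  · rw [if_neg (by omega), if_neg (by omega)]
    simp
  · omega

lemma monic_X_pow_add_X_add_one {t : ℕ} (ht : 2 ≤ t) : (X ^ t + X + 1 : F[X]).Monic := by
  monicity!
  rw [if_pos (by omega), if_neg (by omega)]
  simp

lemma natDegree_X_pow_add_X_add_one_pow {t : ℕ} (ht : 2 ≤ t) (i : ℕ) :
    ((X ^ t + X + 1 : F[X]) ^ i).natDegree = t * i := by
  rw [(monic_X_pow_add_X_add_one ht).natDegree_pow, natDegree_X_pow_add_X_add_one ht, mul_comm]

lemma inv_pow_add_inv_pow_pred_add_one {a : F} (ha : a ≠ 0) {t : ℕ} (ht : 1 ≤ t) :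
    a⁻¹ ^ t + a⁻¹ ^ (t - 1) + 1 = (a ^ t)⁻¹ * (a ^ t + a + 1) := by
  obtain ⟨s, rfl⟩ : ∃ s, t = s + 1 := ⟨t - 1, by omega⟩
  rw [Nat.add_sub_cancel, inv_pow, inv_pow]
  field_simp
  ring

lemma bijOn_inv_setOf_pow_add_add_one_ne_zero {t : ℕ} (ht : 1 ≤ t) :
    Set.BijOn (fun a => a⁻¹) {a : F | a ≠ 0 ∧ a ^ t + a + 1 ≠ 0}
      {a : F | a ≠ 0 ∧ a ^ t + a ^ (t - 1) + 1 ≠ 0} := by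
  have key : ∀ a : F, a ≠ 0 → (a⁻¹ ^ t + a⁻¹ ^ (t - 1) + 1 ≠ 0 ↔ a ^ t + a + 1 ≠ 0) :=
    fun a ha => by rw [inv_pow_add_inv_pow_pred_add_one ha ht]; simp [ha]
  refine Set.InvOn.bijOn ⟨fun a _ => inv_inv a, fun a _ => inv_inv a⟩
    (fun a ⟨ha, h⟩ => ⟨inv_ne_zero ha, (key a ha).2 h⟩) fun b ⟨hb, h⟩ => ⟨inv_ne_zero hb, ?_⟩
  rw [← key _ (inv_ne_zero hb), inv_inv]
  exact h

end Trinomial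

theorem sum_eq_zero_of_trinomial_pow_dvd_goppaSumS {K F : Type*} [Field K] [Fintype K] [Field F]
    [Fintype F] [DecidableEq F] [Algebra K F] {l : ℕ} (hl : 1 ≤ l)
    (hF : Fintype.card F = (Fintype.card K ^ l) ^ 2) {i : ℕ} (hi : 1 ≤ i) {L : Finset F}
    (hL : ∀ a ∈ L, a ^ (Fintype.card K ^ l) + a + 1 ≠ 0) (c : F → K)
    (h : (X ^ (Fintype.card K ^ l) + X + 1 : F[X]) ^ i ∣ goppaSumS L c) :
    ∑ a ∈ L, algebraMap K F (c a) = 0 := by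
  set t := Fintype.card K ^ l
  have ht : 2 ≤ t := Fintype.one_lt_card.trans_le (Nat.le_self_pow (by omega) _)
  set σ := (FiniteField.frobeniusAlgHom K F ^ l : F →ₐ[K] F)
  have hσ : ∀ x, σ x = x ^ t := fun x => by
    rw [AlgHom.coe_pow, FiniteField.coe_frobeniusAlgHom, pow_iterate]
  have hG : ∀ a : F, σ (a ^ t + a + 1) = a ^ t + a + 1 := fun a => by
    rw [map_add, map_add, map_one, map_pow, hσ, ← pow_mul, ← sq, ← hF, FiniteField.pow_card]
    ring
  rw [goppaSumS_algebraMap] at h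
  refine sum_eq_zero_of_dvd_goppaSumS σ.toRingHom hσ ht hi ((monic_X_pow_add_X_add_one ht).pow i)
    (natDegree_X_pow_add_X_add_one_pow ht i) (fun a ha => by simpa using pow_ne_zero i (hL a ha))
    (fun a _ => by simp [hG]) (fun a _ => σ.commutes _) h

/-- with `t = q^l`, `F = GF(t²)`, `L₃ = {α : α^t + α + 1 ≠ 0}`,
`L₃* = L₃ \ {0}` and `L₄* = {α : α ≠ 0 ∧ α^t + α^{t−1} + 1 ≠ 0}`, the map `α ↦ α⁻¹` is a
bijection from `L₃*` onto `L₄*`, and for `1 ≤ i ≤ q` the word `α⁻¹ ↦ c(α)` lies in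
`Γ(L₄*, (X^t + X^{t−1} + 1)^i)` iff some extension of `c` by a value `c₀` at `0` lies in
`Γ(L₃, (X^t + X + 1)^i)`; i.e. `Γ(L₄*, (X^t + X^{t−1} + 1)^i)` is, up to `α ↦ α⁻¹`, the
shortening of `Γ(L₃, (X^t + X + 1)^i)` in the redundancy symbol at position `0`. -/
theorem goppa_C3star_equiv_G4star {K F : Type*} [Field K] [Fintype K]
    [Field F] [Fintype F] [DecidableEq F] [Algebra K F]
    (q l : ℕ) (hq : Fintype.card K = q) (hl : 1 ≤ l)
    (hF : Fintype.card F = (q ^ l) ^ 2) :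
    Set.BijOn (fun a => a⁻¹)
      {a : F | a ≠ 0 ∧ a ^ (q ^ l) + a + 1 ≠ 0}
      {a : F | a ≠ 0 ∧ a ^ (q ^ l) + a ^ (q ^ l - 1) + 1 ≠ 0} ∧
    ∀ i : ℕ, 1 ≤ i → i ≤ q → ∀ c : F → K,
      (((Polynomial.X ^ (q ^ l) + Polynomial.X ^ (q ^ l - 1) + 1) ^ i ∣
          goppaSumS
            (Finset.univ.filter fun a : F => a ≠ 0 ∧ a ^ (q ^ l) + a ^ (q ^ l - 1) + 1 ≠ 0)
            (fun x => c x⁻¹)) ↔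
        ∃ c₀ : K, (Polynomial.X ^ (q ^ l) + Polynomial.X + 1) ^ i ∣
          goppaSumS (Finset.univ.filter fun a : F => a ^ (q ^ l) + a + 1 ≠ 0)
            (fun x => if x = 0 then c₀ else c x)) := by
  subst hq
  set t := Fintype.card K ^ l
  have ht : 2 ≤ t := Fintype.one_lt_card.trans_le (Nat.le_self_pow (by omega) _)
  have hbij := bijOn_inv_setOf_pow_add_add_one_ne_zero (F := F) (by omega : 1 ≤ t)
  refine ⟨hbij, fun i hi _ c => ?_⟩
  set S := univ.filter fun a : F => a ≠ 0 ∧ a ^ t + a + 1 ≠ 0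
  have hS : 0 ∉ S := by simp [S]
  have hT : univ.filter (fun a : F => a ≠ 0 ∧ a ^ t + a ^ (t - 1) + 1 ≠ 0) = S.image (·⁻¹) :=
    coe_injective (by simpa [S] using hbij.image_eq.symm)
  have hL : univ.filter (fun a : F => a ^ t + a + 1 ≠ 0) = insert 0 S := by
    ext a
    by_cases ha : a = 0 <;> simp [S, ha, zero_pow (by omega : t ≠ 0)]
  have hsum (c₀ : K) (h : (X ^ t + X + 1 : F[X]) ^ i ∣
      goppaSumS (insert 0 S) fun x => if x = 0 then c₀ else c x) :
      algebraMap K F c₀ + ∑ a ∈ S, algebraMap K F (c a) = 0 := by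
    have := sum_eq_zero_of_trinomial_pow_dvd_goppaSumS hl hF hi
      (fun a ha => by simpa [← hL] using ha) _ h
    rwa [sum_insert hS, if_pos rfl,
      sum_congr rfl fun a ha => by rw [if_neg (ne_of_mem_of_not_mem ha hS)]] at this
  have hG : (X ^ t + X ^ (t - 1) + 1 : F[X]) ^ i = reflect (t * i) ((X ^ t + X + 1) ^ i) := by
    rw [reflect_pow _ (natDegree_X_pow_add_X_add_one ht).le, reflect_X_pow_add_X_add_one (by omega)]
  rw [hT, hL, goppaSumS_image_inv hS, IsUnit.dvd_mul_left (by simp [hS]), hG,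
    reflect_dvd_reflect_iff (natDegree_X_pow_add_X_add_one_pow ht i)
      (by simp [coeff_zero_eq_eval_zero, zero_pow (by omega : t ≠ 0)]) (natDegree_goppaSumS_le _ _)]
  refine ⟨fun h => ⟨-∑ a ∈ S, c a, ?_⟩, fun ⟨c₀, h⟩ => ?_⟩
  · rw [goppaSumS_insert_zero hS]
    simpa using h
  · have h0 := hsum c₀ h
    rwa [goppaSumS_insert_zero hS, h0, C_0, zero_mul, zero_add] at h
end

section
/- Let q be a prime power, l ≥ 1, t = q^l, and F = GF(t²) (so GF(q) ⊆ GF(t) ⊆ F). Let L = (α₁, …, αₙ) enumerate the set {α ∈ F : α ≠ 0 and α^t + α^{t−1} + 1 ≠ 0}. Then for every integer i with 1 ≤ i ≤ q−2 and every c ∈ GF(q)ⁿ: c belongs to Γ(L, (X^{t+1} + X^t + X)^i) if and only if c belongs to Γ(L, (X^t + X^{t−1} + 1)^i) and Σₖ cₖ · (αₖ^{t+1} + αₖ^t + αₖ)^{−i} = 0 in F. -/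
/-!
Let `G` be monic with `G(αₖ) ≠ 0` and put `wₖ = cₖ / G(αₖ)`. Since `G = (X - αₖ) Qₖ + G(αₖ)` with
`Qₖ = G /ₘ (X - αₖ)`, the syndrome polynomial `S` satisfies `S + P V ≡ 0 [G]` where
`P = ∏ (X - αₖ)` is prime to `G` and `V = Σ wₖ Qₖ` has degree `< deg G`. Hence `G ∣ S ↔ V = 0`,
and the coefficients of `V` form a unitriangular system in the power sums `pⱼ = Σ wₖ αₖʲ`:
`G ∣ S` iff `pⱼ = 0` for all `j < deg G`.

For `g = X^{t+1} + X^t + X = X h` and `wₖ = cₖ g(αₖ)⁻ⁱ`, divisibility by `gⁱ` asks for `pⱼ = 0`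
with `j < i(t + 1)`, divisibility by `hⁱ` for `i ≤ j < i(t + 1)`, and the extra check is `p₀ = 0`.
The remaining indices `0 < j < i` come for free: `g(α) = N(α) + Tr(α)` is fixed by `x ↦ x^t`,
so `pⱼ^t = p_{jt}`, and `i ≤ jt < it` because `i ≤ q - 2 < t`.
-/

open Polynomial

open Finset

theorem forall_sum_range_mul_eq_zero_iff {R : Type*} [Semiring R] {N : ℕ} {g p : ℕ → R}
    (hN : g N = 1) :
    (∀ j < N, ∑ s ∈ range (N - j), g (j + 1 + s) * p s = 0) ↔ ∀ j < N, p j = 0 := by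
  refine ⟨fun h r hr => ?_, fun h j hj => sum_eq_zero fun s hs => by
    rw [h s (by grind), mul_zero]⟩
  induction r using Nat.strong_induction_on with
  | _ r ih =>
    have hsum := h (N - 1 - r) (by omega)
    rwa [show N - (N - 1 - r) = r + 1 by omega, sum_range_succ,
      sum_eq_zero fun s hs => by rw [ih s (mem_range.1 hs) (by grind), mul_zero],
      zero_add, show N - 1 - r + 1 + r = N by omega, hN, one_mul] at hsum

theorem forall_lt_mul_succ_eq_zero_iff {M : Type*} [MonoidWithZero M] [NoZeroDivisors M]
    {p : ℕ → M} {i t : ℕ} (hi : 0 < i) (hit : i ≤ t) (hp : ∀ j, p (j * t) = p j ^ t) :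
    (∀ j < i * (t + 1), p j = 0) ↔ (∀ j < i * t, p (j + i) = 0) ∧ p 0 = 0 := by
  rw [mul_add_one]
  refine ⟨fun h => ⟨fun j hj => h _ (by omega), h 0 (by omega)⟩, fun ⟨hhigh, h0⟩ j hj => ?_⟩
  rcases le_or_gt i j with hij | hji
  · simpa [Nat.sub_add_cancel hij] using hhigh (j - i) (by omega)
  rcases Nat.eq_zero_or_pos j with rfl | hj0
  · exact h0
  have hjt : i ≤ j * t := hit.trans (Nat.le_mul_of_pos_left t hj0)
  have hjt' : j * t < i * t := Nat.mul_lt_mul_of_pos_right hji (by omega)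
  have hpow := hhigh (j * t - i) (by omega)
  rw [Nat.sub_add_cancel hjt, hp] at hpow
  exact (pow_eq_zero_iff (by omega)).1 hpow

theorem pow_succ_add_pow_add_self {R : Type*} [CommSemiring R] (x : R) {t : ℕ} (ht : t ≠ 0) :
    x ^ (t + 1) + x ^ t + x = x * (x ^ t + x ^ (t - 1) + 1) := by
  obtain ⟨s, rfl⟩ := Nat.exists_eq_add_one_of_ne_zero ht
  rw [Nat.add_sub_cancel]
  ring

namespace Polynomial

section
variable {R : Type*} [CommRing R]

theorem X_sub_C_mul_divByMonic_add_C_eval (G : R[X]) (a : R) :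
    (X - C a) * (G /ₘ (X - C a)) + C (G.eval a) = G := by
  rw [← modByMonic_X_sub_C_eq_C_eval, add_comm, modByMonic_add_div]

theorem coeff_divByMonic_X_sub_C_eq_sum_range (G : R[X]) (a : R) (j : ℕ) :
    (G /ₘ (X - C a)).coeff j = ∑ s ∈ range (G.natDegree - j), G.coeff (j + 1 + s) * a ^ s := by
  rw [coeff_divByMonic_X_sub_C, ← Ico_add_one_right_eq_Icc, sum_Ico_eq_sum_range]
  refine sum_congr (by congr 1; omega) fun s _ => ?_
  rw [Nat.add_sub_cancel_left, mul_comm]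

end

theorem monic_X_pow_add_X_pow_sub_one_add_one {R : Type*} [Semiring R] {t : ℕ}
    (ht : t ≠ 0) : (X ^ t + X ^ (t - 1) + 1 : R[X]).Monic := by
  monicity!
  simp [show t ≠ t - 1 by omega, ht]

theorem natDegree_X_pow_add_X_pow_sub_one_add_one {R : Type*} [Semiring R]
    [Nontrivial R] {t : ℕ} (ht : t ≠ 0) : (X ^ t + X ^ (t - 1) + 1 : R[X]).natDegree = t := by
  compute_degree!
  simp [show t ≠ t - 1 by omega, ht]

section
variable {F : Type*} [Field F] {ι : Type*}

theorem isCoprime_prod_X_sub_C {G : F[X]} {s : Finset ι} {α : ι → F}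
    (h : ∀ k ∈ s, G.eval (α k) ≠ 0) : IsCoprime G (∏ k ∈ s, (X - C (α k))) :=
  IsCoprime.prod_right fun k hk => ((irreducible_X_sub_C (α k)).coprime_iff_not_dvd.2
    fun hdvd => h k hk (dvd_iff_isRoot.1 hdvd)).symm

theorem sum_C_mul_prod_erase_add_prod_mul_sum [Fintype ι] [DecidableEq ι] (G : F[X])
    (α w : ι → F) :
    ∑ k, C (w k * G.eval (α k)) * ∏ j ∈ univ.erase k, (X - C (α j)) +
      (∏ k, (X - C (α k))) * ∑ k, C (w k) * (G /ₘ (X - C (α k))) =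
      G * ∑ k, C (w k) * ∏ j ∈ univ.erase k, (X - C (α j)) := by
  rw [mul_sum, mul_sum, ← sum_add_distrib]
  refine sum_congr rfl fun k _ => ?_
  rw [← mul_prod_erase univ (fun j => X - C (α j)) (mem_univ k)]
  conv_rhs => rw [← X_sub_C_mul_divByMonic_add_C_eval G (α k)]
  rw [C_mul]
  ring

theorem degree_sum_C_mul_divByMonic_lt [Fintype ι] {G : F[X]} (hG : G ≠ 0) (α w : ι → F) :
    (∑ k, C (w k) * (G /ₘ (X - C (α k)))).degree < G.degree := by
  refine (degree_sum_le _ _).trans_lt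
    ((Finset.sup_lt_iff (bot_lt_iff_ne_bot.2 (degree_ne_bot.2 hG))).2 fun k _ => ?_)
  rw [← smul_eq_C_mul]
  refine (degree_smul_le _ _).trans_lt ?_
  exact degree_divByMonic_lt _ _ hG (by rw [degree_X_sub_C]; exact zero_lt_one)

theorem sum_C_mul_divByMonic_eq_zero_iff [Fintype ι] {G : F[X]} (hG : G.Monic) (α w : ι → F) :
    ∑ k, C (w k) * (G /ₘ (X - C (α k))) = 0 ↔ ∀ j < G.natDegree, ∑ k, w k * α k ^ j = 0 := by
  set V := ∑ k, C (w k) * (G /ₘ (X - C (α k)))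
  have hcoeff (j : ℕ) : V.coeff j =
      ∑ s ∈ range (G.natDegree - j), G.coeff (j + 1 + s) * ∑ k, w k * α k ^ s := by
    simp only [V, finsetSum_coeff, coeff_C_mul, coeff_divByMonic_X_sub_C_eq_sum_range, mul_sum]
    rw [sum_comm]
    exact sum_congr rfl fun _ _ => sum_congr rfl fun _ _ => by ring
  rw [← forall_sum_range_mul_eq_zero_iff hG.coeff_natDegree]
  simp_rw [← hcoeff]
  refine ⟨fun h j _ => by rw [h, coeff_zero], fun h => ext fun j => ?_⟩
  rw [coeff_zero]
  by_cases hj : j < G.natDegree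
  · exact h j hj
  · refine coeff_eq_zero_of_degree_lt ((degree_sum_C_mul_divByMonic_lt hG.ne_zero α w).trans_le ?_)
    rw [degree_eq_natDegree hG.ne_zero]
    exact_mod_cast not_lt.1 hj

theorem Monic.dvd_sum_C_mul_prod_erase_iff [Fintype ι] [DecidableEq ι] {G : F[X]} (hG : G.Monic)
    {α : ι → F} (he : ∀ k, G.eval (α k) ≠ 0) (d : ι → F) :
    G ∣ ∑ k, C (d k) * ∏ j ∈ univ.erase k, (X - C (α j)) ↔
      ∀ j < G.natDegree, ∑ k, d k * (G.eval (α k))⁻¹ * α k ^ j = 0 := by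
  set w := fun k => d k * (G.eval (α k))⁻¹
  have key := sum_C_mul_prod_erase_add_prod_mul_sum G α w
  simp only [w, inv_mul_cancel_right₀ (he _)] at key
  calc _ ↔ G ∣ (∏ k, (X - C (α k))) * ∑ k, C (w k) * (G /ₘ (X - C (α k))) := by
        rw [eq_sub_of_add_eq key, dvd_sub_right (dvd_mul_right _ _)]
    _ ↔ G ∣ ∑ k, C (w k) * (G /ₘ (X - C (α k))) :=
        ⟨(isCoprime_prod_X_sub_C fun k _ => he k).dvd_of_dvd_mul_left, (Dvd.dvd.mul_left · _)⟩
    _ ↔ ∑ k, C (w k) * (G /ₘ (X - C (α k))) = 0 :=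
        ⟨fun h => eq_zero_of_dvd_of_degree_lt h (degree_sum_C_mul_divByMonic_lt hG.ne_zero α w),
          fun h => h ▸ dvd_zero G⟩
    _ ↔ _ := sum_C_mul_divByMonic_eq_zero_iff hG α w

end

end Polynomial

theorem FiniteField.frobeniusAlgHom_pow_apply (K R : Type*) [Field K] [Fintype K] [CommRing R]
    [Algebra K R] (l : ℕ) (x : R) :
    (frobeniusAlgHom K R ^ l) x = x ^ Fintype.card K ^ l := by
  rw [AlgHom.coe_pow, coe_frobeniusAlgHom, pow_iterate]

section Frobenius

variable {K F : Type*} [Field K] [Fintype K] [Field F] [Fintype F] [Algebra K F] {l t : ℕ}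

/-- `x ^ (t + 1) + x ^ t + x` is the norm plus the trace of `x` from `GF(t²)` down to `GF(t)`. -/
theorem pow_succ_add_pow_add_self_pow (ht : Fintype.card K ^ l = t)
    (hF : Fintype.card F = t ^ 2) (x : F) :
    (x ^ (t + 1) + x ^ t + x) ^ t = x ^ (t + 1) + x ^ t + x := by
  set φ : F →ₐ[K] F := FiniteField.frobeniusAlgHom K F ^ l
  have hφ (y : F) : φ y = y ^ t := by rw [FiniteField.frobeniusAlgHom_pow_apply, ht]
  have hφφ (y : F) : φ (φ y) = y := by rw [hφ, hφ, ← pow_mul, ← sq, ← hF, FiniteField.pow_card]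
  calc (x ^ (t + 1) + x ^ t + x) ^ t = φ (x * φ x + φ x + x) := by rw [hφ, hφ, pow_succ']
    _ = x * φ x + φ x + x := by rw [map_add, map_add, map_mul, hφφ]; ring
    _ = x ^ (t + 1) + x ^ t + x := by rw [hφ, pow_succ']

theorem sum_algebraMap_mul_inv_mul_pow_pow {n : ℕ} (ht : Fintype.card K ^ l = t)
    (hF : Fintype.card F = t ^ 2) (α : Fin n → F) (c : Fin n → K) (i j : ℕ) :
    (∑ k, algebraMap K F (c k) * ((α k ^ (t + 1) + α k ^ t + α k) ^ i)⁻¹ * α k ^ j) ^ t =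
      ∑ k, algebraMap K F (c k) * ((α k ^ (t + 1) + α k ^ t + α k) ^ i)⁻¹ * α k ^ (j * t) := by
  rw [← ht, ← FiniteField.frobeniusAlgHom_pow_apply K F]
  simp only [map_sum, map_mul, map_inv₀, map_pow, AlgHom.commutes,
    FiniteField.frobeniusAlgHom_pow_apply, ht, pow_succ_add_pow_add_self_pow ht hF, ← pow_mul,
    mul_comm j]

end Frobenius

section Goppa

variable {K F : Type*} [Field K] [Field F] [Algebra K F] {n : ℕ} {α : Fin n → F}

theorem dvd_goppaSum_iff {G : F[X]} (hG : G.Monic) (he : ∀ k, G.eval (α k) ≠ 0) (c : Fin n → K) :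
    G ∣ goppaSum α c ↔
      ∀ j < G.natDegree, ∑ k, algebraMap K F (c k) * (G.eval (α k))⁻¹ * α k ^ j = 0 :=
  hG.dvd_sum_C_mul_prod_erase_iff he _

theorem X_mul_pow_dvd_goppaSum_iff {H : F[X]} (hH : H.Monic) (hα : ∀ k, α k ≠ 0)
    (hHα : ∀ k, H.eval (α k) ≠ 0) (c : Fin n → K) (i : ℕ) :
    (X * H) ^ i ∣ goppaSum α c ↔ ∀ j < i * (H.natDegree + 1),
      ∑ k, algebraMap K F (c k) * ((α k * H.eval (α k)) ^ i)⁻¹ * α k ^ j = 0 := by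
  rw [dvd_goppaSum_iff ((monic_X.mul hH).pow i) fun k => by
    rw [eval_pow, eval_mul, eval_X]; exact pow_ne_zero i (mul_ne_zero (hα k) (hHα k))]
  simp only [eval_pow, eval_mul, eval_X, (monic_X.mul hH).natDegree_pow, natDegree_X_mul hH.ne_zero]

theorem pow_dvd_goppaSum_iff {H : F[X]} (hH : H.Monic) (hα : ∀ k, α k ≠ 0)
    (hHα : ∀ k, H.eval (α k) ≠ 0) (c : Fin n → K) (i : ℕ) :
    H ^ i ∣ goppaSum α c ↔ ∀ j < i * H.natDegree,
      ∑ k, algebraMap K F (c k) * ((α k * H.eval (α k)) ^ i)⁻¹ * α k ^ (j + i) = 0 := by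
  rw [dvd_goppaSum_iff (hH.pow i) fun k => by simpa using pow_ne_zero i (hHα k),
    hH.natDegree_pow]
  refine forall₂_congr fun j _ => ?_
  rw [sum_congr rfl fun k _ => ?_]
  have := hα k
  have := hHα k
  simp only [eval_pow, mul_pow, pow_add]
  field_simp

end Goppa

theorem goppa_G5_iff_G4_and_check_general {K F : Type*} [Field K] [Fintype K]
    [Field F] [Fintype F] [Algebra K F]
    (q l : ℕ) (hq : Fintype.card K = q) (hl : 1 ≤ l)
    (hF : Fintype.card F = (q ^ l) ^ 2)
    {n : ℕ} (α : Fin n → F)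
    (hrange : ∀ x : F, x ∈ Set.range α ↔
      (x ≠ 0 ∧ x ^ (q ^ l) + x ^ (q ^ l - 1) + 1 ≠ 0))
    (i : ℕ) (hi1 : 1 ≤ i) (hi2 : i ≤ q - 2) (c : Fin n → K) :
    ((Polynomial.X ^ (q ^ l + 1) + Polynomial.X ^ (q ^ l) + Polynomial.X) ^ i ∣
        goppaSum α c) ↔
      (((Polynomial.X ^ (q ^ l) + Polynomial.X ^ (q ^ l - 1) + 1) ^ i ∣ goppaSum α c) ∧
        ∑ k, algebraMap K F (c k) *
          ((α k ^ (q ^ l + 1) + α k ^ (q ^ l) + α k) ^ i)⁻¹ = 0) := by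
  set t := q ^ l
  have hit : i ≤ t := hi2.trans ((Nat.sub_le q 2).trans (Nat.le_self_pow (by omega) q))
  have ht : t ≠ 0 := by omega
  have hH := monic_X_pow_add_X_pow_sub_one_add_one (R := F) ht
  have hHdeg := natDegree_X_pow_add_X_pow_sub_one_add_one (R := F) ht
  set H : F[X] := X ^ t + X ^ (t - 1) + 1
  have hα k : α k ≠ 0 ∧ H.eval (α k) ≠ 0 := by simpa [H] using (hrange (α k)).1 ⟨k, rfl⟩
  set p : ℕ → F := fun j =>
    ∑ k, algebraMap K F (c k) * ((α k ^ (t + 1) + α k ^ t + α k) ^ i)⁻¹ * α k ^ j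
  have hG5 : (X ^ (t + 1) + X ^ t + X) ^ i ∣ goppaSum α c ↔ ∀ j < i * (t + 1), p j = 0 := by
    rw [pow_succ_add_pow_add_self _ ht, X_mul_pow_dvd_goppaSum_iff hH (hα · |>.1) (hα · |>.2)]
    simp [p, H, hHdeg, pow_succ_add_pow_add_self _ ht]
  have hG4 : H ^ i ∣ goppaSum α c ↔ ∀ j < i * t, p (j + i) = 0 := by
    rw [pow_dvd_goppaSum_iff hH (hα · |>.1) (hα · |>.2)]
    simp [p, H, hHdeg, pow_succ_add_pow_add_self _ ht]
  have hp j : p (j * t) = p j ^ t :=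
    (sum_algebraMap_mul_inv_mul_pow_pow (by rw [hq]) hF α c i j).symm
  rw [hG5, hG4, forall_lt_mul_succ_eq_zero_iff hi1 hit hp]
  simp [p]

/-- with `t = q^l`, `F = GF(t²)` and `L` enumerating
`{α ∈ F : α ≠ 0 ∧ α^t + α^{t−1} + 1 ≠ 0}`, for `1 ≤ i ≤ q − 2` a word `c` lies in
`Γ(L, (X^{t+1} + X^t + X)^i)` iff it lies in `Γ(L, (X^t + X^{t−1} + 1)^i)` and satisfies
the extra parity check `Σₖ cₖ (αₖ^{t+1} + αₖ^t + αₖ)^{−i} = 0`. -/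
theorem goppa_G5_iff_G4_and_check {K F : Type*} [Field K] [Fintype K]
    [Field F] [Fintype F] [Algebra K F]
    (q l : ℕ) (hq : Fintype.card K = q) (hl : 1 ≤ l)
    (hF : Fintype.card F = (q ^ l) ^ 2)
    {n : ℕ} (α : Fin n → F) (hα : Function.Injective α)
    (hrange : ∀ x : F, x ∈ Set.range α ↔
      (x ≠ 0 ∧ x ^ (q ^ l) + x ^ (q ^ l - 1) + 1 ≠ 0))
    (i : ℕ) (hi1 : 1 ≤ i) (hi2 : i ≤ q - 2) (c : Fin n → K) :
    ((Polynomial.X ^ (q ^ l + 1) + Polynomial.X ^ (q ^ l) + Polynomial.X) ^ i ∣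
        goppaSum α c) ↔
      (((Polynomial.X ^ (q ^ l) + Polynomial.X ^ (q ^ l - 1) + 1) ^ i ∣ goppaSum α c) ∧
        ∑ k, algebraMap K F (c k) *
          ((α k ^ (q ^ l + 1) + α k ^ (q ^ l) + α k) ^ i)⁻¹ = 0) :=
  goppa_G5_iff_G4_and_check_general q l hq hl hF α hrange i hi1 hi2 c
end

section
/- Let q be a prime power, l ≥ 1, t = q^l, and F = GF(t²) (so GF(q) ⊆ GF(t) ⊆ F). Let L₆ = (α₁, …, αₙ) enumerate the set {α ∈ F : α^{t+1} + 1 ≠ 0}. Then for every integer i with 1 < i < q−1, the minimum Hamming weight of a nonzero codeword of the q-ary Goppa code Γ(L₆, (X^{t+1} + 1)^i) is exactly i(t+1) + 1; that is, every nonzero codeword has Hamming weight at least i(t+1) + 1, and there exists a codeword of Hamming weight exactly i(t+1) + 1. -/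
/-!
The lower bound is the designed distance of a Goppa code. If `c` vanishes off `S`, its syndrome
polynomial is `∏_{j ∉ S} (X - αⱼ)` times the Lagrange interpolant on `S` of the values
`cₖ H'(αₖ)`, where `H = ∏_{k ∈ S} (X - αₖ)`. The first factor is coprime to `G`, so `G` divides
the interpolant, which is nonzero of degree `< |S|`.

For the codeword, pick `A ⊆ GF(q) \ {0, -1}` with `|A| = i` and put
`H = X ∏_{a ∈ A} (X^{t+1} - a)`. Since `a^{t-1} = 1`, `H` divides `X^{t²} - X`, so it has
`i(t+1) + 1` distinct roots `x`, each with `x^{t+1} ∈ {0} ∪ A`, hence in `L₆`. Running the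
interpolation backwards, `G` is the interpolant of `cₖ H'(αₖ)` for `cₖ = G(αₖ) / H'(αₖ)`.
These `cₖ` lie in `GF(q)`: as `t = 0` in `F`, `H' = Q'(X^{t+1})` with
`Q = X ∏_{a ∈ A} (X - a) ∈ GF(q)[X]`, and `G(x) = (x^{t+1} + 1)^i`.
-/

open Polynomial

open Finset Lagrange

section Nodal

variable {R F ι : Type*} [CommRing R] [Field F]

theorem isCoprime_nodal_of_eval_ne_zero {p : F[X]} {s : Finset ι} {v : ι → F}
    (h : ∀ i ∈ s, eval (v i) p ≠ 0) : IsCoprime p (nodal s v) :=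
  IsCoprime.prod_right fun i hi =>
    ((irreducible_X_sub_C (v i)).coprime_iff_not_dvd.2 (by rw [dvd_iff_isRoot]; exact h i hi)).symm

variable [DecidableEq ι]

theorem nodal_erase_eq_nodal_sdiff_mul {s t : Finset ι} (hst : s ⊆ t) {i : ι} (hi : i ∈ s)
    (v : ι → R) : nodal (t.erase i) v = nodal (t \ s) v * nodal (s.erase i) v := by
  have hsdiff : t.erase i \ s.erase i = t \ s := by
    ext j
    by_cases hji : j = i <;> simp [hji, hi]
  rw [nodal_eq, ← prod_sdiff (erase_subset_erase i hst), hsdiff, nodal_eq, nodal_eq]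

theorem eval_derivative_nodal_ne_zero {s : Finset ι} {v : ι → F} (hvs : Set.InjOn v s) {i : ι}
    (hi : i ∈ s) : eval (v i) (derivative (nodal s v)) ≠ 0 := by
  simpa [nodalWeight_eq_eval_derivative_nodal hi] using nodalWeight_ne_zero hvs hi

theorem interpolate_eq_sum_C_mul_nodal_erase (s : Finset ι) (v : ι → F) (r : ι → F) :
    interpolate s v r = ∑ i ∈ s, C (r i * nodalWeight s v i) * nodal (s.erase i) v := by
  rw [interpolate_apply]
  refine sum_congr rfl fun i hi => ?_
  rw [basis_eq_prod_sub_inv_mul_nodal_div hi, ← nodal_erase_eq_nodal_div hi, C_mul, mul_assoc]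

end Nodal

theorem derivative_X_mul_comp_X_pow_succ {R : Type*} [CommRing R] (p : R[X]) {t : ℕ}
    (ht : (t : R) = 0) :
    derivative (X * p.comp (X ^ (t + 1))) = (derivative (X * p)).comp (X ^ (t + 1)) := by
  simp only [derivative_mul, derivative_X, derivative_comp, derivative_X_pow, one_mul, add_comp,
    mul_comp, X_comp, Nat.cast_add, Nat.cast_one, ht, zero_add, C_1, add_tsub_cancel_right]
  ring

theorem natDegree_X_pow_succ_add_one_pow {R : Type*} [CommRing R] [Nontrivial R] (m i : ℕ) :
    (((X : R[X]) ^ (m + 1) + 1) ^ i).natDegree = i * (m + 1) := by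
  rw [← C_1, (monic_X_pow_add_C _ m.succ_ne_zero).natDegree_pow, natDegree_X_pow_add_C]

theorem FiniteField.nodal_roots_toFinset_eq {F : Type*} [Field F] [Fintype F] [DecidableEq F]
    {H : F[X]} (hH : H.Monic) (hdvd : H ∣ X ^ Fintype.card F - X) :
    nodal H.roots.toFinset id = H := by
  have h0 : (X ^ Fintype.card F - X : F[X]) ≠ 0 :=
    FiniteField.X_pow_card_sub_X_ne_zero F Fintype.one_lt_card
  have hsplit : Splits (X ^ Fintype.card F - X : F[X]) := by
    rw [splits_iff_card_roots, FiniteField.roots_X_pow_card_sub_X,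
      FiniteField.X_pow_card_sub_X_natDegree_eq F Fintype.one_lt_card]
    rfl
  have hnodup : H.roots.Nodup := Multiset.nodup_of_le (roots.le_of_dvd h0 hdvd)
    (by rw [FiniteField.roots_X_pow_card_sub_X]; exact univ.nodup)
  conv_rhs => rw [(hsplit.of_dvd h0 hdvd).eq_prod_roots_of_monic hH]
  rw [nodal_eq, prod_eq_multiset_prod, Multiset.toFinset_val, hnodup.dedup]
  rfl

theorem FiniteField.pow_card_pow_sub_one_eq_one {K : Type*} [Field K] [Fintype K] {a : K}
    (ha : a ≠ 0) (l : ℕ) : a ^ (Fintype.card K ^ l - 1) = 1 := by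
  have h := FiniteField.pow_card_pow l a
  rwa [← pow_sub_one_mul (pow_pos Fintype.card_pos l).ne', mul_eq_right₀ ha] at h

section Goppa

variable {K F : Type*} [Field K] [Field F] [Algebra K F] {n : ℕ} {α : Fin n → F}

theorem goppaSum_eq_nodal_mul_interpolate (hα : Function.Injective α) {S : Finset (Fin n)}
    {c : Fin n → K} (hc : ∀ k ∉ S, c k = 0) :
    goppaSum α c = nodal (univ \ S) α *
      interpolate S α (fun k => algebraMap K F (c k) * eval (α k) (derivative (nodal S α))) := by
  rw [interpolate_eq_sum_C_mul_nodal_erase, mul_sum, goppaSum,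
    ← sum_subset (subset_univ S) fun k _ hk => by simp [hc k hk]]
  refine sum_congr rfl fun k hk => ?_
  rw [nodalWeight_eq_eval_derivative_nodal hk,
    mul_inv_cancel_right₀ (eval_derivative_nodal_ne_zero hα.injOn hk), ← nodal_eq,
    nodal_erase_eq_nodal_sdiff_mul (subset_univ S) hk]
  ring

theorem natDegree_lt_card_support_of_dvd_goppaSum [DecidableEq K] (hα : Function.Injective α)
    {G : F[X]} (hG : ∀ j, eval (α j) G ≠ 0) {c : Fin n → K} (hdvd : G ∣ goppaSum α c)
    (hc : c ≠ 0) : G.natDegree < #{k | c k ≠ 0} := by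
  set S : Finset (Fin n) := {k | c k ≠ 0}
  obtain ⟨k, hk⟩ := Function.ne_iff.mp hc
  have hkS : k ∈ S := by simpa [S] using hk
  rw [goppaSum_eq_nodal_mul_interpolate hα (S := S) fun j hj => by simpa [S] using hj] at hdvd
  set I := interpolate S α (fun k => algebraMap K F (c k) * eval (α k) (derivative (nodal S α)))
  have hGI : G ∣ I :=
    (isCoprime_nodal_of_eval_ne_zero fun j _ => hG j).dvd_of_dvd_mul_left hdvd
  have hI : I ≠ 0 := by
    intro hI
    have hval : eval (α k) I = _ := eval_interpolate_at_node _ hα.injOn hkS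
    rw [hI, eval_zero] at hval
    exact mul_ne_zero (by simpa using hk) (eval_derivative_nodal_ne_zero hα.injOn hkS) hval.symm
  calc G.natDegree ≤ I.natDegree := natDegree_le_of_dvd hGI hI
    _ < #S := (natDegree_lt_iff_degree_lt hI).2 (degree_interpolate_lt _ hα.injOn)

theorem exists_dvd_goppaSum_support_eq [DecidableEq K] (hα : Function.Injective α)
    {S : Finset (Fin n)} {G : F[X]} (hdeg : G.degree < #S)
    (hval : ∀ k ∈ S, ∃ y : K, y ≠ 0 ∧
      algebraMap K F y * eval (α k) (derivative (nodal S α)) = eval (α k) G) :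
    ∃ c : Fin n → K, G ∣ goppaSum α c ∧ ({k | c k ≠ 0} : Finset (Fin n)) = S := by
  choose! y hy0 hy using hval
  let c : Fin n → K := fun k => if k ∈ S then y k else 0
  refine ⟨c, ⟨nodal (univ \ S) α, ?_⟩, ?_⟩
  · rw [goppaSum_eq_nodal_mul_interpolate hα (S := S) fun k hk => if_neg hk, mul_comm]
    congr 1
    refine (eq_interpolate_of_eval_eq _ hα.injOn hdeg fun k hk => ?_).symm
    simp [hk, hy k hk]
  · ext k
    by_cases hk : k ∈ S <;> simp [c, hk, hy0]

end Goppa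

section FiberLocator

variable {K F : Type*} [Field K] [Field F] [Algebra K F]

-- Its roots are the fibres over `{0} ∪ A` of the norm `x ↦ x ^ (t + 1)`.
variable (F) in
noncomputable def fiberLocator (A : Finset K) (t : ℕ) : F[X] :=
  X * (nodal A (algebraMap K F)).comp (X ^ (t + 1))

variable {A : Finset K} {t : ℕ}

theorem fiberLocator_monic : (fiberLocator F A t).Monic :=
  monic_X.mul (nodal_monic.comp (monic_X_pow _) (by simp))

theorem natDegree_fiberLocator : (fiberLocator F A t).natDegree = #A * (t + 1) + 1 := by
  rw [fiberLocator, natDegree_X_mul (nodal_monic.comp (monic_X_pow _) (by simp)).ne_zero,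
    natDegree_comp, natDegree_nodal, natDegree_X_pow]

theorem exists_pow_succ_eq_of_eval_fiberLocator_eq_zero [DecidableEq K] {x : F}
    (hx : eval x (fiberLocator F A t) = 0) : ∃ a ∈ insert 0 A, x ^ (t + 1) = algebraMap K F a := by
  rw [fiberLocator, eval_mul, eval_X, eval_comp, eval_pow, eval_X, mul_eq_zero, eval_nodal,
    prod_eq_zero_iff] at hx
  rcases hx with rfl | ⟨a, ha, hxa⟩
  · exact ⟨0, mem_insert_self 0 A, by simp⟩
  · exact ⟨a, mem_insert_of_mem ha, sub_eq_zero.mp hxa⟩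

theorem derivative_fiberLocator [DecidableEq K] (hA : 0 ∉ A) (ht : (t : F) = 0) :
    derivative (fiberLocator F A t) =
      (derivative (nodal (insert 0 A) (algebraMap K F))).comp (X ^ (t + 1)) := by
  rw [fiberLocator, derivative_X_mul_comp_X_pow_succ _ ht, nodal_insert_eq_nodal hA, map_zero,
    C_0, sub_zero]

theorem fiberLocator_dvd_X_pow_sub_X (ht : 1 ≤ t)
    (hA : ∀ a ∈ A, algebraMap K F a ^ (t - 1) = 1) : fiberLocator F A t ∣ X ^ (t ^ 2) - X := by
  have hnodal : nodal A (algebraMap K F) ∣ X ^ (t - 1) - 1 :=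
    prod_dvd_of_coprime
      (fun a _ b _ hab => pairwise_coprime_X_sub_C (algebraMap K F).injective hab)
      fun a ha => by simp [dvd_iff_isRoot, hA a ha]
  obtain ⟨r, hr⟩ := hnodal
  refine ⟨r.comp (X ^ (t + 1)), ?_⟩
  have hexp : t ^ 2 = (t + 1) * (t - 1) + 1 := by
    obtain ⟨s, rfl⟩ : ∃ s, t = s + 1 := ⟨t - 1, by omega⟩
    rw [Nat.add_sub_cancel]; ring
  rw [fiberLocator, mul_assoc, ← mul_comp, ← hr, sub_comp, pow_comp, X_comp, one_comp, ← pow_mul,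
    mul_sub, hexp, pow_succ', mul_one]

theorem pow_succ_add_one_ne_zero_of_eval_fiberLocator_eq_zero [DecidableEq K] (hA : -1 ∉ A)
    {x : F} (hx : eval x (fiberLocator F A t) = 0) : x ^ (t + 1) + 1 ≠ 0 := by
  obtain ⟨a, ha, hxa⟩ := exists_pow_succ_eq_of_eval_fiberLocator_eq_zero hx
  rw [hxa, ← map_one (algebraMap K F), ← map_add, _root_.map_ne_zero]
  intro h
  rcases mem_insert.1 ha with rfl | ha
  · simp at h
  · exact hA (eq_neg_of_add_eq_zero_left h ▸ ha)

theorem exists_algebraMap_mul_eval_derivative_fiberLocator [DecidableEq K] (hA0 : 0 ∉ A)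
    (hA1 : -1 ∉ A) (ht : (t : F) = 0) {x : F} (hx : eval x (fiberLocator F A t) = 0) (i : ℕ) :
    ∃ y : K, y ≠ 0 ∧
      algebraMap K F y * eval x (derivative (fiberLocator F A t)) = (x ^ (t + 1) + 1) ^ i := by
  obtain ⟨a, ha, hxa⟩ := exists_pow_succ_eq_of_eval_fiberLocator_eq_zero hx
  have ha1 : a + 1 ≠ 0 := fun h => pow_succ_add_one_ne_zero_of_eval_fiberLocator_eq_zero hA1 hx
    (by rw [hxa, ← map_one (algebraMap K F), ← map_add, h, map_zero])
  have hd : ∏ b ∈ (insert 0 A).erase a, (a - b) ≠ 0 :=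
    prod_ne_zero_iff.2 fun b hb => sub_ne_zero.2 (ne_of_mem_erase hb).symm
  refine ⟨(a + 1) ^ i / ∏ b ∈ (insert 0 A).erase a, (a - b),
    div_ne_zero (pow_ne_zero _ ha1) hd, ?_⟩
  rw [derivative_fiberLocator hA0 ht, eval_comp, eval_pow, eval_X, hxa,
    eval_nodal_derivative_eval_node_eq ha, eval_nodal]
  simp only [← map_sub, ← map_prod]
  rw [← map_mul, div_mul_cancel₀ _ hd, map_pow, map_add, map_one]

theorem exists_dvd_goppaSum_card_support_eq [Fintype F] [DecidableEq K] {n : ℕ} {α : Fin n → F}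
    (hα : Function.Injective α) (ht1 : 1 ≤ t) (htF : (t : F) = 0)
    (hF : Fintype.card F = t ^ 2) (hrange : ∀ x : F, x ^ (t + 1) + 1 ≠ 0 → x ∈ Set.range α)
    (hA0 : 0 ∉ A) (hA1 : -1 ∉ A) (hAt : ∀ a ∈ A, algebraMap K F a ^ (t - 1) = 1) :
    ∃ c : Fin n → K, ((X : F[X]) ^ (t + 1) + 1) ^ #A ∣ goppaSum α c ∧
      #{k | c k ≠ 0} = #A * (t + 1) + 1 := by
  classical
  set T := (fiberLocator F A t).roots.toFinset
  have hTH : nodal T id = fiberLocator F A t := FiniteField.nodal_roots_toFinset_eq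
    fiberLocator_monic (hF ▸ fiberLocator_dvd_X_pow_sub_X ht1 hAt)
  have hroot : ∀ x ∈ T, eval x (fiberLocator F A t) = 0 := fun x hx =>
    (mem_roots fiberLocator_monic.ne_zero).1 (Multiset.mem_toFinset.1 hx)
  have hTα : ∀ x ∈ T, x ∈ Set.range α := fun x hx =>
    hrange x (pow_succ_add_one_ne_zero_of_eval_fiberLocator_eq_zero hA1 (hroot x hx))
  set S := T.preimage α hα.injOn
  have hSH : nodal S α = fiberLocator F A t := by
    rw [← hTH, nodal_eq, nodal_eq]
    exact prod_preimage α T hα.injOn (fun x => X - C x) fun x hx hxα => absurd (hTα x hx) hxα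
  have hS : #S = #A * (t + 1) + 1 := by
    rw [card_preimage, filter_true_of_mem hTα, ← natDegree_nodal (v := (id : F → F)), hTH,
      natDegree_fiberLocator]
  have hdeg : (((X : F[X]) ^ (t + 1) + 1) ^ #A).degree < #S := by
    refine degree_le_natDegree.trans_lt ?_
    rw [natDegree_X_pow_succ_add_one_pow, hS, Nat.cast_lt]
    omega
  obtain ⟨c, hdvd, hc⟩ := exists_dvd_goppaSum_support_eq (K := K) hα hdeg fun k hk => by
    rw [hSH]
    simpa using exists_algebraMap_mul_eval_derivative_fiberLocator hA0 hA1 htF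
      (hroot _ (mem_preimage.1 hk)) #A
  exact ⟨c, hdvd, hc ▸ hS⟩

end FiberLocator

theorem goppa_G6_min_distance_general {K F : Type*} [Field K] [Fintype K] [DecidableEq K]
    [Field F] [Fintype F] [Algebra K F]
    (q l : ℕ) (hq : Fintype.card K = q) (hl : 1 ≤ l)
    (hF : Fintype.card F = (q ^ l) ^ 2)
    {n : ℕ} (α : Fin n → F) (hα : Function.Injective α)
    (hrange : ∀ x : F, x ∈ Set.range α ↔ x ^ (q ^ l + 1) + 1 ≠ 0)
    (i : ℕ) (hi2 : i < q - 1) :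
    (∀ c : Fin n → K, ((Polynomial.X ^ (q ^ l + 1) + 1) ^ i ∣ goppaSum α c) → c ≠ 0 →
        i * (q ^ l + 1) + 1 ≤ (Finset.univ.filter fun k => c k ≠ 0).card) ∧
      (∃ c : Fin n → K, ((Polynomial.X ^ (q ^ l + 1) + 1) ^ i ∣ goppaSum α c) ∧
        (Finset.univ.filter fun k => c k ≠ 0).card = i * (q ^ l + 1) + 1) := by
  refine ⟨fun c hdvd hc => ?_, ?_⟩
  · have hG (j : Fin n) : eval (α j) (((X : F[X]) ^ (q ^ l + 1) + 1) ^ i) ≠ 0 := by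
      simpa using pow_ne_zero i ((hrange (α j)).1 ⟨j, rfl⟩)
    have h := natDegree_lt_card_support_of_dvd_goppaSum hα hG hdvd hc
    rwa [natDegree_X_pow_succ_add_one_pow] at h
  · have hcard : i ≤ #(univ \ {0, -1} : Finset K) :=
      calc i ≤ #(univ : Finset K) - #({0, -1} : Finset K) := by
            have := card_le_two (a := (0 : K)) (b := -1)
            rw [card_univ, hq]
            omega
        _ ≤ _ := le_card_sdiff _ _
    obtain ⟨A, hA, rfl⟩ := exists_subset_card_eq hcard
    have htF : ((q ^ l : ℕ) : F) = 0 := by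
      rw [← map_natCast (algebraMap K F), Nat.cast_pow, ← hq, FiniteField.cast_card_eq_zero,
        zero_pow (by omega), map_zero]
    have hAt (a : K) (ha : a ∈ A) : algebraMap K F a ^ (q ^ l - 1) = 1 := by
      rw [← map_pow, ← hq, FiniteField.pow_card_pow_sub_one_eq_one
        (fun h => (mem_sdiff.1 (hA ha)).2 (by simp [h])), map_one]
    exact exists_dvd_goppaSum_card_support_eq hα (Nat.one_le_pow _ _ (by omega)) htF hF
      (fun x hx => (hrange x).2 hx) (fun h => (mem_sdiff.1 (hA h)).2 (by simp))
      (fun h => (mem_sdiff.1 (hA h)).2 (by simp)) hAt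

/-- with `t = q^l`, `F = GF(t²)` and `L₆` enumerating
`{α ∈ F : α^{t+1} + 1 ≠ 0}`, for `1 < i < q − 1` the minimum Hamming weight of a nonzero
codeword of `Γ(L₆, (X^{t+1} + 1)^i)` is exactly `i(t+1) + 1`. -/
theorem goppa_G6_min_distance {K F : Type*} [Field K] [Fintype K] [DecidableEq K]
    [Field F] [Fintype F] [Algebra K F]
    (q l : ℕ) (hq : Fintype.card K = q) (hl : 1 ≤ l)
    (hF : Fintype.card F = (q ^ l) ^ 2)
    {n : ℕ} (α : Fin n → F) (hα : Function.Injective α)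
    (hrange : ∀ x : F, x ∈ Set.range α ↔ x ^ (q ^ l + 1) + 1 ≠ 0)
    (i : ℕ) (hi1 : 1 < i) (hi2 : i < q - 1) :
    (∀ c : Fin n → K, ((Polynomial.X ^ (q ^ l + 1) + 1) ^ i ∣ goppaSum α c) → c ≠ 0 →
        i * (q ^ l + 1) + 1 ≤ (Finset.univ.filter fun k => c k ≠ 0).card) ∧
      (∃ c : Fin n → K, ((Polynomial.X ^ (q ^ l + 1) + 1) ^ i ∣ goppaSum α c) ∧
        (Finset.univ.filter fun k => c k ≠ 0).card = i * (q ^ l + 1) + 1) :=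
  goppa_G6_min_distance_general q l hq hl hF α hα hrange i hi2
end
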